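/- arXiv:2302.04637 — 6 statements merged into one kernel-verified Lean document; each statement's English description precedes it below -/
import Mathlib

section
/- There exists a universal constant C > 0 such that for every integer N ≥ 2 and all pairwise distinct points X_1, …, X_N ∈ ℝ³ one has S_3 := max_{1≤i≤N} Σ_{j=1}^N d_{ij}^{−3} ≤ C (log N) / d_min³. -/
open scoped BigOperators
open Metric MeasureTheory
open scoped ENNReal

/-- The minimal distance between pairwise distinct points `X 1, …, X N`. -/
noncomputable def dmin {N : ℕ} (X : Fin N → EuclideanSpace ℝ (Fin 3)) : ℝ :=
  sInf {r : ℝ | ∃ i j : Fin N, i ≠ j ∧ r = dist (X i) (X j)}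

/-- The distance `d_{ij} = |X_i - X_j|` for `i ≠ j`, with the convention `d_{ii} = d_min`. -/
noncomputable def dd {N : ℕ} (X : Fin N → EuclideanSpace ℝ (Fin 3)) (i j : Fin N) : ℝ :=
  if i = j then dmin X else dist (X i) (X j)

/-- `S_β = max_i ∑_j d_{ij}^{-β}`. -/
noncomputable def Ssum {N : ℕ} (X : Fin N → EuclideanSpace ℝ (Fin 3)) (β : ℝ) : ℝ :=
  ⨆ i : Fin N, ∑ j : Fin N, (dd X i j) ^ (-β)

lemma dset_fin {N : ℕ} (X : Fin N → EuclideanSpace ℝ (Fin 3)) :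
    {r : ℝ | ∃ i j : Fin N, i ≠ j ∧ r = dist (X i) (X j)}.Finite := by
  apply Set.Finite.subset (Set.finite_range (fun p : Fin N × Fin N => dist (X p.1) (X p.2)))
  rintro r ⟨i, j, -, rfl⟩
  exact ⟨(i, j), rfl⟩

lemma dmin_le {N : ℕ} (X : Fin N → EuclideanSpace ℝ (Fin 3)) {i j : Fin N} (hij : i ≠ j) :
    dmin X ≤ dist (X i) (X j) :=
  csInf_le (dset_fin X).bddBelow ⟨i, j, hij, rfl⟩

lemma dmin_pos {N : ℕ} (X : Fin N → EuclideanSpace ℝ (Fin 3)) (hN : 2 ≤ N)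
    (hX : Function.Injective X) : 0 < dmin X := by
  have h0 : (0 : ℕ) < N := by omega
  have h1 : (1 : ℕ) < N := by omega
  have hne : ({r : ℝ | ∃ i j : Fin N, i ≠ j ∧ r = dist (X i) (X j)}).Nonempty :=
    ⟨_, ⟨⟨0, h0⟩, ⟨1, h1⟩, by simp [Fin.ext_iff], rfl⟩⟩
  obtain ⟨i, j, hij, hd⟩ := hne.csInf_mem (dset_fin X)
  rw [dmin, hd]
  exact dist_pos.2 fun h => hij (hX h)

/-- Volume packing bound: `n` points pairwise `δ`-separated within distance `R` of `x`. -/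
lemma packing {δ R : ℝ} (hδ : 0 < δ) (hR : 0 ≤ R) {n : ℕ}
    (Y : Fin n → EuclideanSpace ℝ (Fin 3)) (x : EuclideanSpace ℝ (Fin 3))
    (hsep : ∀ i j : Fin n, i ≠ j → δ ≤ dist (Y i) (Y j))
    (hin : ∀ i, dist (Y i) x ≤ R) :
    (n : ℝ) ≤ (2 * R / δ + 1) ^ 3 := by
  have hd : ∀ i j : Fin n, i ≠ j → Disjoint (ball (Y i) (δ/2)) (ball (Y j) (δ/2)) := by
    intro i j hij
    exact ball_disjoint_ball (by linarith [hsep i j hij])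
  have hsub : ∀ i : Fin n, ball (Y i) (δ/2) ⊆ ball x (R + δ/2) := by
    intro i y hy
    have h1 := hin i
    simp only [mem_ball] at hy ⊢
    calc dist y x ≤ dist y (Y i) + dist (Y i) x := dist_triangle _ _ _
      _ < δ/2 + R := by linarith
      _ = R + δ/2 := by ring
  have hmeas : volume (⋃ i ∈ (Finset.univ : Finset (Fin n)), ball (Y i) (δ/2))
      ≤ volume (ball x (R + δ/2)) :=
    measure_mono (by simpa using Set.iUnion_subset fun i => hsub i)
  rw [measure_biUnion_finset (fun i _ j _ hij => hd i j hij)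
    (fun i _ => measurableSet_ball)] at hmeas
  have hvol : ∀ (c : EuclideanSpace ℝ (Fin 3)) (r : ℝ), 0 < r →
      volume (ball c r) = ENNReal.ofReal (r ^ 3)
        * volume (ball (0 : EuclideanSpace ℝ (Fin 3)) 1) := by
    intro c r hr
    rw [Measure.addHaar_ball_of_pos volume c hr, finrank_euclideanSpace_fin]
  have hB0 : volume (ball (0 : EuclideanSpace ℝ (Fin 3)) 1) ≠ 0 :=
    (measure_ball_pos volume 0 one_pos).ne'
  have hBt : volume (ball (0 : EuclideanSpace ℝ (Fin 3)) 1) ≠ ⊤ := measure_ball_lt_top.ne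
  rw [hvol x (R + δ/2) (by linarith)] at hmeas
  have hsum : ∑ i : Fin n, volume (ball (Y i) (δ/2))
      = (n : ℝ≥0∞) * (ENNReal.ofReal ((δ/2) ^ 3)
        * volume (ball (0 : EuclideanSpace ℝ (Fin 3)) 1)) := by
    rw [Finset.sum_congr rfl fun i _ => hvol (Y i) (δ/2) (by linarith)]
    simp [Finset.sum_const, nsmul_eq_mul]
  rw [hsum, ← mul_assoc] at hmeas
  have hmeas2 : (n : ℝ≥0∞) * ENNReal.ofReal ((δ/2) ^ 3) ≤ ENNReal.ofReal ((R + δ/2) ^ 3) :=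
    (ENNReal.mul_le_mul_iff_left hB0 hBt).1 hmeas
  have hδ3 : 0 < (δ/2) ^ 3 := by positivity
  have h2 : ENNReal.ofReal ((n : ℝ) * (δ/2) ^ 3) ≤ ENNReal.ofReal ((R + δ/2) ^ 3) := by
    rw [ENNReal.ofReal_mul (by positivity)]
    simpa [ENNReal.ofReal_natCast] using hmeas2
  have hreal : (n : ℝ) * (δ/2) ^ 3 ≤ (R + δ/2) ^ 3 :=
    (ENNReal.ofReal_le_ofReal_iff (by positivity)).1 h2
  have key : (R + δ/2) ^ 3 = (2 * R / δ + 1) ^ 3 * (δ/2) ^ 3 := by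
    field_simp
  rw [key] at hreal
  exact le_of_mul_le_mul_right (by linarith) hδ3

lemma rpow_neg3 {x : ℝ} (hx : 0 < x) : x ^ (-(3:ℝ)) = (x ^ 3)⁻¹ := by
  rw [Real.rpow_neg hx.le]
  rw [show (3:ℝ) = ((3:ℕ):ℝ) by norm_num, Real.rpow_natCast]

lemma key_bound {N : ℕ} (X : Fin N → EuclideanSpace ℝ (Fin 3)) (hN : 2 ≤ N)
    (hX : Function.Injective X) (i : Fin N) :
    ∑ j : Fin N, dd X i j ^ (-(3:ℝ)) ≤ 2500 * Real.log N / dmin X ^ 3 := by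
  set δ := dmin X with hδdef
  have hδ : 0 < δ := dmin_pos X hN hX
  have hf : ∀ j, δ ≤ dd X i j := by
    intro j
    by_cases h : i = j
    · simp [dd, h, hδdef]
    · simpa [dd, h] using dmin_le X h
  set σ := Tuple.sort (dd X i) with hσdef
  have hmono : Monotone (dd X i ∘ σ) := Tuple.monotone_sort (dd X i)
  have hsum : ∑ j : Fin N, dd X i j ^ (-(3:ℝ))
      = ∑ m : Fin N, dd X i (σ m) ^ (-(3:ℝ)) :=
    (Equiv.sum_comp σ (fun j => dd X i j ^ (-(3:ℝ)))).symm
  rw [hsum]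
  have hterm : ∀ m : Fin N, dd X i (σ m) ^ (-(3:ℝ)) ≤ 1000 / (δ ^ 3 * ((m:ℕ) + 1)) := by
    intro m
    have hRδ : δ ≤ dd X i (σ m) := hf _
    set R := dd X i (σ m) with hRdef
    have hR0 : 0 < R := hδ.trans_le hRδ
    rcases Nat.eq_zero_or_pos (m : ℕ) with hm | hm
    · rw [rpow_neg3 hR0, hm]
      simp only [Nat.cast_zero, zero_add, mul_one]
      calc (R ^ 3)⁻¹ ≤ (δ ^ 3)⁻¹ :=
            inv_anti₀ (pow_pos hδ 3) (pow_le_pow_left₀ hδ.le hRδ 3)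
        _ ≤ 1000 / δ ^ 3 := by
            rw [div_eq_mul_inv]
            have : (0:ℝ) ≤ (δ ^ 3)⁻¹ := by positivity
            linarith
    · -- m ≥ 1 : use packing
      have hmN : (m : ℕ) + 1 ≤ N := m.isLt
      have hpack : (((m : ℕ) + 1 : ℕ) : ℝ) ≤ (2 * R / δ + 1) ^ 3 := by
        apply packing hδ (le_of_lt hR0)
          (fun k : Fin ((m:ℕ)+1) => X (σ (Fin.castLE hmN k))) (X i)
        · intro k l hkl
          apply dmin_le
          intro h
          exact hkl (Fin.castLE_injective hmN (σ.injective h))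
        · intro k
          by_cases h : σ (Fin.castLE hmN k) = i
          · simp [h, hR0.le]
          · have h1 : dist (X (σ (Fin.castLE hmN k))) (X i)
                = dd X i (σ (Fin.castLE hmN k)) := by
              rw [dd, if_neg (fun hh => h hh.symm), dist_comm]
            rw [h1]
            have hle : (Fin.castLE hmN k) ≤ m := by
              rw [Fin.le_def]
              simpa using Nat.lt_succ_iff.1 k.isLt
            exact hmono hle
      have hu : (0:ℝ) ≤ 2 * R / δ := by positivity
      have htm : ((m:ℕ) + 1 : ℝ) ≤ (2 * R / δ + 1) ^ 3 := by
        push_cast at hpack ⊢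
        exact hpack
      have ht2 : (2 : ℝ) ≤ (2 * R / δ + 1) ^ 3 := by
        have : (1 : ℝ) ≤ (m : ℕ) := by exact_mod_cast hm
        linarith
      have hu14 : (1:ℝ)/4 ≤ 2 * R / δ := by nlinarith [sq_nonneg (2 * R / δ)]
      have h5 : ((m:ℕ) + 1 : ℝ) ≤ 1000 * R ^ 3 / δ ^ 3 := by
        calc ((m:ℕ) + 1 : ℝ) ≤ (2 * R / δ + 1) ^ 3 := htm
          _ ≤ (5 * (2 * R / δ)) ^ 3 := pow_le_pow_left₀ (by linarith) (by linarith) 3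
          _ = 1000 * R ^ 3 / δ ^ 3 := by
              field_simp
              ring
      have h6 : δ ^ 3 * ((m:ℕ) + 1) / 1000 ≤ R ^ 3 := by
        rw [div_le_iff₀ (by norm_num : (0:ℝ) < 1000)] at *
        nlinarith [pow_pos hδ 3, (le_div_iff₀ (pow_pos hδ 3)).1 h5]
      rw [rpow_neg3 hR0]
      calc (R ^ 3)⁻¹ ≤ (δ ^ 3 * ((m:ℕ) + 1) / 1000)⁻¹ :=
            inv_anti₀ (by positivity) h6
        _ = 1000 / (δ ^ 3 * ((m:ℕ) + 1)) := by rw [inv_div]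
  calc ∑ m : Fin N, dd X i (σ m) ^ (-(3:ℝ))
      ≤ ∑ m : Fin N, 1000 / (δ ^ 3 * ((m:ℕ) + 1)) := Finset.sum_le_sum fun m _ => hterm m
    _ = (1000 / δ ^ 3) * ∑ m : Fin N, (((m:ℕ) : ℝ) + 1)⁻¹ := by
        rw [Finset.mul_sum]
        congr 1
        ext m
        rw [div_mul_eq_div_div, div_eq_mul_inv (1000 / δ ^ 3)]
    _ = (1000 / δ ^ 3) * (harmonic N : ℝ) := by
        congr 1
        rw [Fin.sum_univ_eq_sum_range (fun k => ((k : ℝ) + 1)⁻¹)]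
        rw [harmonic]
        push_cast
        rfl
    _ ≤ (1000 / δ ^ 3) * (1 + Real.log N) :=
        mul_le_mul_of_nonneg_left (harmonic_le_one_add_log N) (by positivity)
    _ ≤ (1000 / δ ^ 3) * ((5/2) * Real.log N) := by
        apply mul_le_mul_of_nonneg_left _ (by positivity)
        have hlog2 : (0.6931471803 : ℝ) < Real.log 2 := Real.log_two_gt_d9
        have hlogN : Real.log 2 ≤ Real.log N := by
          apply Real.log_le_log (by norm_num)
          exact_mod_cast hN
        linarith
    _ = 2500 * Real.log N / δ ^ 3 := by ring

/-- There is a universal constant `C > 0` such that for every `N ≥ 2` and all pairwise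
distinct points `X_1, …, X_N ∈ ℝ³`, one has `S_3 ≤ C log N / d_min³`. -/
theorem stmt0 :
    ∃ C : ℝ, 0 < C ∧ ∀ (N : ℕ), 2 ≤ N →
      ∀ X : Fin N → EuclideanSpace ℝ (Fin 3), Function.Injective X →
        Ssum X 3 ≤ C * Real.log N / (dmin X) ^ 3 := by
  refine ⟨2500, by norm_num, fun N hN X hX => ?_⟩
  have : Nonempty (Fin N) := Fin.pos_iff_nonempty.1 (by omega)
  rw [Ssum]
  exact ciSup_le fun i => key_bound X hN hX i
end

section
/- There exists a universal constant C > 0 such that for every integer N ≥ 2, all pairwise distinct points X_1, …, X_N ∈ ℝ³, and all indices 1 ≤ j, k ≤ N one has Σ_{i=1}^N 1/(d_{ij}² d_{ik}²) ≤ C S_2 / d_{jk}². -/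
open scoped BigOperators

private lemma dmin_facts {N : ℕ} (hN : 2 ≤ N) (X : Fin N → EuclideanSpace ℝ (Fin 3))
    (hX : Function.Injective X) :
    0 < dmin X ∧ ∀ i j : Fin N, i ≠ j → dmin X ≤ dist (X i) (X j) := by
  set S : Set ℝ := {r : ℝ | ∃ i j : Fin N, i ≠ j ∧ r = dist (X i) (X j)} with hS
  have hfin : S.Finite := by
    apply (Set.finite_range (fun p : Fin N × Fin N => dist (X p.1) (X p.2))).subset
    rintro r ⟨i, j, _, rfl⟩
    exact ⟨(i, j), rfl⟩
  have i0 : Fin N := ⟨0, by omega⟩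
  have j0 : Fin N := ⟨1, by omega⟩
  have hne : (⟨0, by omega⟩ : Fin N) ≠ ⟨1, by omega⟩ := by
    simp [Fin.ext_iff]
  have hSne : S.Nonempty := ⟨dist (X ⟨0, by omega⟩) (X ⟨1, by omega⟩), _, _, hne, rfl⟩
  constructor
  · obtain ⟨i, j, hij, heq⟩ := hSne.csInf_mem hfin
    rw [dmin, ← hS, heq]
    exact dist_pos.2 (fun h => hij (hX h))
  · intro i j hij
    exact csInf_le hfin.bddBelow ⟨i, j, hij, rfl⟩

private lemma dd_comm {N : ℕ} (X : Fin N → EuclideanSpace ℝ (Fin 3)) (i j : Fin N) :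
    dd X i j = dd X j i := by
  unfold dd
  split_ifs with h1 h2 h2 <;> simp_all [dist_comm]

private lemma key_ineq {a b c : ℝ} (ha : 0 < a) (hb : 0 < b) (hc : 0 < c)
    (h : c ≤ a + b) : 1 / (a ^ 2 * b ^ 2) ≤ 2 / c ^ 2 * (1 / a ^ 2 + 1 / b ^ 2) := by
  have hc2 : c ^ 2 ≤ 2 * (a ^ 2 + b ^ 2) := by nlinarith [sq_nonneg (a - b), sq_nonneg (a + b - c)]
  have h1 : 1 / (a ^ 2 * b ^ 2) = c ^ 2 / (c ^ 2 * (a ^ 2 * b ^ 2)) := by field_simp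
  have h2 : 2 / c ^ 2 * (1 / a ^ 2 + 1 / b ^ 2) = (2 * (a ^ 2 + b ^ 2)) / (c ^ 2 * (a ^ 2 * b ^ 2)) := by
    field_simp; ring
  rw [h1, h2]
  gcongr

/-- There is a universal constant `C > 0` such that for every `N ≥ 2`, all pairwise distinct
points `X_1, …, X_N ∈ ℝ³` and all indices `j, k`, one has
`∑_i 1/(d_{ij}² d_{ik}²) ≤ C S_2 / d_{jk}²`. -/
theorem stmt2 :
    ∃ C : ℝ, 0 < C ∧ ∀ (N : ℕ), 2 ≤ N →
      ∀ X : Fin N → EuclideanSpace ℝ (Fin 3), Function.Injective X →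
        ∀ j k : Fin N,
          ∑ i : Fin N, 1 / ((dd X i j) ^ 2 * (dd X i k) ^ 2) ≤
            C * Ssum X 2 / (dd X j k) ^ 2 := by
  refine ⟨4, by norm_num, fun N hN X hX j k => ?_⟩
  obtain ⟨hdmin, hmin_le⟩ := dmin_facts hN X hX
  have hpos : ∀ i j : Fin N, 0 < dd X i j := by
    intro i j
    unfold dd
    split_ifs with h
    · exact hdmin
    · exact dist_pos.2 (fun h' => h (hX h'))
  have hle : ∀ i j : Fin N, i ≠ j → dd X i j ≤ dist (X i) (X j) := by
    intro i j h
    unfold dd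
    rw [if_neg h]
  -- triangle inequality for dd
  have htri : ∀ i : Fin N, dd X j k ≤ dd X i j + dd X i k := by
    intro i
    by_cases hjk : j = k
    · subst hjk
      have : dd X j j = dmin X := by unfold dd; rw [if_pos rfl]
      rw [this]
      by_cases hij : i = j
      · subst hij
        rw [this]
        linarith [hdmin]
      · have h1 : dmin X ≤ dd X i j := by
          unfold dd; rw [if_neg hij]; exact hmin_le i j hij
        linarith [(hpos i j).le, h1]
    · have hddjk : dd X j k = dist (X j) (X k) := by unfold dd; rw [if_neg hjk]
      rw [hddjk]
      by_cases hij : i = j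
      · subst hij
        have : dd X i k = dist (X i) (X k) := by unfold dd; rw [if_neg hjk]
        rw [this]
        linarith [(hpos i i).le]
      · by_cases hik : i = k
        · subst hik
          have : dd X i j = dist (X i) (X j) := by unfold dd; rw [if_neg (Ne.symm hjk)]
          rw [this, dist_comm (X i) (X j)]
          linarith [(hpos i i).le]
        · have h1 : dd X i j = dist (X i) (X j) := by unfold dd; rw [if_neg hij]
          have h2 : dd X i k = dist (X i) (X k) := by unfold dd; rw [if_neg hik]
          rw [h1, h2, dist_comm (X i) (X j)]
          exact dist_triangle (X j) (X i) (X k)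
  -- sums bounded by Ssum
  have hSsum : ∀ m : Fin N, ∑ i : Fin N, 1 / dd X m i ^ 2 ≤ Ssum X 2 := by
    intro m
    have heq : ∑ i : Fin N, 1 / dd X m i ^ 2 = ∑ i : Fin N, (dd X m i) ^ (-(2:ℝ)) := by
      refine Finset.sum_congr rfl fun i _ => ?_
      rw [Real.rpow_neg (hpos m i).le, Real.rpow_two, one_div]
    rw [heq, Ssum]
    haveI : Nonempty (Fin N) := ⟨⟨0, by omega⟩⟩
    exact le_ciSup (f := fun i : Fin N => ∑ j : Fin N, (dd X i j) ^ (-(2:ℝ)))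
      (Set.Finite.bddAbove (Set.finite_range _)) m
  have hcpos := hpos j k
  calc ∑ i : Fin N, 1 / ((dd X i j) ^ 2 * (dd X i k) ^ 2)
      ≤ ∑ i : Fin N, 2 / (dd X j k) ^ 2 * (1 / (dd X i j) ^ 2 + 1 / (dd X i k) ^ 2) := by
        refine Finset.sum_le_sum fun i _ => ?_
        exact key_ineq (hpos i j) (hpos i k) hcpos (htri i)
    _ = 2 / (dd X j k) ^ 2 *
        ((∑ i : Fin N, 1 / dd X j i ^ 2) + (∑ i : Fin N, 1 / dd X k i ^ 2)) := by
        rw [← Finset.mul_sum, Finset.sum_add_distrib]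
        congr 1
        congr 1 <;> exact Finset.sum_congr rfl fun i _ => by rw [dd_comm]
    _ ≤ 2 / (dd X j k) ^ 2 * (Ssum X 2 + Ssum X 2) := by
        apply mul_le_mul_of_nonneg_left _ (by positivity)
        exact add_le_add (hSsum j) (hSsum k)
    _ = 4 * Ssum X 2 / (dd X j k) ^ 2 := by ring
end

section
/- Let ρ⁰ be a Borel probability measure on ℝ³ that is absolutely continuous with respect to Lebesgue measure. Then there exists a constant c > 0, depending only on ρ⁰, such that for every N ∈ ℕ, every choice of points X_1, …, X_N ∈ ℝ³, and every Borel probability measure γ on ℝ³ × ℝ³ whose first marginal equals ρ_N := (1/N) Σ_{i=1}^N δ_{X_i} and whose second marginal equals ρ⁰, one has ∫_{ℝ³×ℝ³} |x − y|² dγ(x,y) ≥ c² N^{−2/3}. -/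
open MeasureTheory
open scoped ENNReal

/-- Let `ρ⁰` be a Borel probability measure on `ℝ³` absolutely continuous with respect to
Lebesgue measure. Then there is `c > 0`, depending only on `ρ⁰`, such that for every `N`,
all points `X_1, …, X_N ∈ ℝ³` and every probability measure `γ` on `ℝ³ × ℝ³` whose first
marginal is the empirical measure `ρ_N = (1/N) ∑ δ_{X_i}` and whose second marginal is `ρ⁰`,
one has `∫ |x - y|² dγ(x,y) ≥ c² N^{-2/3}`. -/
theorem stmt5 (ρ₀ : Measure (EuclideanSpace ℝ (Fin 3))) [IsProbabilityMeasure ρ₀]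
    (habs : ρ₀ ≪ volume) :
    ∃ c : ℝ, 0 < c ∧ ∀ (N : ℕ) (X : Fin N → EuclideanSpace ℝ (Fin 3))
      (γ : Measure (EuclideanSpace ℝ (Fin 3) × EuclideanSpace ℝ (Fin 3))),
      IsProbabilityMeasure γ →
      γ.map Prod.fst = ((N : ℝ≥0∞))⁻¹ • ∑ i : Fin N, Measure.dirac (X i) →
      γ.map Prod.snd = ρ₀ →
      ENNReal.ofReal (c ^ 2 * (N : ℝ) ^ (-(2 : ℝ) / 3)) ≤
        ∫⁻ p, ENNReal.ofReal (dist p.1 p.2 ^ 2) ∂γ := by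
  classical
  set E := EuclideanSpace ℝ (Fin 3)
  obtain ⟨δ, hδ0, hδ⟩ := exists_pos_setLIntegral_lt_of_measure_lt
    (μ := (volume : Measure E)) (f := ρ₀.rnDeriv volume)
    (Measure.lintegral_rnDeriv_lt_top ρ₀ volume).ne (by norm_num : (2⁻¹ : ℝ≥0∞) ≠ 0)
  set δ' : ℝ≥0∞ := min δ 1 with hδ'def
  have hδ'0 : 0 < δ' := lt_min hδ0 one_pos
  have hδ'top : δ' ≠ ⊤ := ((min_le_right δ 1).trans_lt ENNReal.one_lt_top).ne
  set d : ℝ := δ'.toReal / 2 with hd_def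
  have hd0 : 0 < d := by
    have := ENNReal.toReal_pos hδ'0.ne' hδ'top
    positivity
  have hdδ : ENNReal.ofReal d < δ := by
    have h1 : ENNReal.ofReal d < δ' := by
      rw [ENNReal.ofReal_lt_iff_lt_toReal hd0.le hδ'top]
      linarith [ENNReal.toReal_pos hδ'0.ne' hδ'top]
    exact h1.trans_le (min_le_left _ _)
  set κ : ℝ≥0∞ := volume (Metric.ball (0 : E) 1) with hκdef
  have hκ0 : 0 < κ := Metric.measure_ball_pos _ _ one_pos
  have hκtop : κ ≠ ⊤ := measure_ball_lt_top.ne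
  set k : ℝ := κ.toReal with hkdef
  have hk0 : 0 < k := ENNReal.toReal_pos hκ0.ne' hκtop
  set a : ℝ := d / k with hadef
  have ha0 : 0 < a := div_pos hd0 hk0
  refine ⟨a ^ ((1 : ℝ) / 3) / Real.sqrt 2, by positivity, ?_⟩
  intro N X γ hγ hfst hsnd
  rcases Nat.eq_zero_or_pos N with rfl | hN
  · exfalso
    have h1 : γ.map Prod.fst Set.univ = 1 := by
      rw [Measure.map_apply measurable_fst MeasurableSet.univ]
      simp
    rw [hfst] at h1
    simp at h1
  have hNR : (0 : ℝ) < N := Nat.cast_pos.mpr hN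
  have haN : (0 : ℝ) < a / N := div_pos ha0 hNR
  set r : ℝ := (a / N) ^ ((1 : ℝ) / 3) with hrdef
  have hr0 : 0 < r := Real.rpow_pos_of_pos haN _
  have hr3 : r ^ 3 = a / N := by
    rw [hrdef, ← Real.rpow_natCast ((a / N) ^ ((1 : ℝ) / 3)) 3, ← Real.rpow_mul haN.le]
    norm_num
  set S : Set E := Set.range X with hSdef
  have hSm : MeasurableSet S := (Set.finite_range X).measurableSet
  set B : Set E := ⋃ i, Metric.ball (X i) r with hBdef
  have hBm : MeasurableSet B := MeasurableSet.iUnion fun i => measurableSet_ball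
  -- volume bound on B
  have hvolB : volume B < δ := by
    have h1 : volume B ≤ ∑ i : Fin N, volume (Metric.ball (X i) r) :=
      measure_iUnion_fintype_le _ _
    have h2 : ∀ i : Fin N, volume (Metric.ball (X i) r) = ENNReal.ofReal (r ^ 3) * κ := by
      intro i
      rw [Measure.addHaar_ball volume (X i) hr0.le]
      congr 2
      simp
    have h3 : ∑ i : Fin N, volume (Metric.ball (X i) r)
        = (N : ℝ≥0∞) * (ENNReal.ofReal (r ^ 3) * κ) := by
      simp [h2, Finset.sum_const, nsmul_eq_mul]
    have h4 : (N : ℝ≥0∞) * (ENNReal.ofReal (r ^ 3) * κ) = ENNReal.ofReal d := by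
      rw [← ENNReal.ofReal_natCast N, ← ENNReal.ofReal_toReal hκtop, ← hkdef,
        ← ENNReal.ofReal_mul (by positivity), ← ENNReal.ofReal_mul (by positivity)]
      congr 1
      rw [hr3]
      field_simp [hk0.ne', hNR.ne']
      rw [hadef, div_mul_cancel₀ _ hk0.ne']
    calc volume B ≤ _ := h1
      _ = ENNReal.ofReal d := by rw [h3, h4]
      _ < δ := hdδ
  -- ρ₀ of B small
  have hρB : ρ₀ B < 2⁻¹ := by
    have h := hδ B hvolB
    rwa [Measure.setLIntegral_rnDeriv habs] at h
  have hρBc : (2⁻¹ : ℝ≥0∞) ≤ ρ₀ Bᶜ := by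
    rw [prob_compl_eq_one_sub hBm]
    calc (2⁻¹ : ℝ≥0∞) = 1 - 2⁻¹ := ENNReal.one_sub_inv_two.symm
      _ ≤ 1 - ρ₀ B := tsub_le_tsub_left hρB.le 1
  -- γ lives over S in the first coordinate
  have hγS : γ (Prod.fst ⁻¹' Sᶜ) = 0 := by
    have h : γ (Prod.fst ⁻¹' Sᶜ) = ((N : ℝ≥0∞)⁻¹ • ∑ i : Fin N, Measure.dirac (X i)) Sᶜ := by
      rw [← Measure.map_apply measurable_fst hSm.compl, hfst]
    rw [h, Measure.smul_apply, Measure.finset_sum_apply]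
    have : ∀ i : Fin N, Measure.dirac (X i) Sᶜ = 0 := by
      intro i
      rw [Measure.dirac_apply' _ hSm.compl]
      exact Set.indicator_of_notMem (by simp [hSdef]) _
    simp [this]
  have hγB : γ (Prod.snd ⁻¹' Bᶜ) = ρ₀ Bᶜ := by
    rw [← Measure.map_apply measurable_snd hBm.compl, hsnd]
  set A : Set (E × E) := S ×ˢ Bᶜ with hAdef
  have hAm : MeasurableSet A := hSm.prod hBm.compl
  have hγA : (2⁻¹ : ℝ≥0∞) ≤ γ A := by
    have hsub : Prod.snd ⁻¹' Bᶜ ⊆ A ∪ Prod.fst ⁻¹' Sᶜ := by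
      rintro ⟨x, y⟩ hy
      by_cases hx : x ∈ S
      · exact Or.inl ⟨hx, hy⟩
      · exact Or.inr hx
    calc (2⁻¹ : ℝ≥0∞) ≤ ρ₀ Bᶜ := hρBc
      _ = γ (Prod.snd ⁻¹' Bᶜ) := hγB.symm
      _ ≤ γ (A ∪ Prod.fst ⁻¹' Sᶜ) := measure_mono hsub
      _ ≤ γ A + γ (Prod.fst ⁻¹' Sᶜ) := measure_union_le _ _
      _ = γ A := by rw [hγS, add_zero]
  -- pointwise bound on A
  have hpt : ∀ p ∈ A, ENNReal.ofReal (r ^ 2) ≤ ENNReal.ofReal (dist (Prod.fst p) (Prod.snd p) ^ 2) := by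
    rintro ⟨x, y⟩ ⟨hx, hy⟩
    obtain ⟨i, rfl⟩ := hx
    have hyi : y ∉ Metric.ball (X i) r := fun h => hy (Set.mem_iUnion.mpr ⟨i, h⟩)
    have hdist : r ≤ dist (X i) y := by
      rw [dist_comm]
      simpa [Metric.mem_ball, not_lt] using hyi
    exact ENNReal.ofReal_le_ofReal (pow_le_pow_left₀ hr0.le hdist 2)
  have hmeas : Measurable fun p : E × E => ENNReal.ofReal (dist p.1 p.2 ^ 2) :=
    ((measurable_fst.dist measurable_snd).pow_const 2).ennreal_ofReal
  -- the key algebraic identity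
  have hr2 : r ^ 2 = a ^ ((2 : ℝ) / 3) * (N : ℝ) ^ (-(2 : ℝ) / 3) := by
    have h1 : r ^ 2 = (a / N) ^ ((2 : ℝ) / 3) := by
      rw [hrdef, ← Real.rpow_natCast ((a / N) ^ ((1 : ℝ) / 3)) 2, ← Real.rpow_mul haN.le]
      norm_num
    rw [h1, Real.div_rpow ha0.le hNR.le, div_eq_mul_inv, ← Real.rpow_neg hNR.le]
    congr 1
    ring
  have hc2 : (a ^ ((1 : ℝ) / 3) / Real.sqrt 2) ^ 2 * (N : ℝ) ^ (-(2 : ℝ) / 3)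
      = r ^ 2 * (2 : ℝ)⁻¹ := by
    have h2 : (a ^ ((1 : ℝ) / 3)) ^ 2 = a ^ ((2 : ℝ) / 3) := by
      rw [← Real.rpow_natCast (a ^ ((1 : ℝ) / 3)) 2, ← Real.rpow_mul ha0.le]
      norm_num
    rw [div_pow, Real.sq_sqrt (by norm_num : (0:ℝ) ≤ 2), h2, hr2]
    ring
  calc ENNReal.ofReal ((a ^ ((1 : ℝ) / 3) / Real.sqrt 2) ^ 2 * (N : ℝ) ^ (-(2 : ℝ) / 3))
      = ENNReal.ofReal (r ^ 2) * 2⁻¹ := by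
        rw [hc2, ENNReal.ofReal_mul (by positivity)]
        congr 1
        rw [ENNReal.ofReal_inv_of_pos two_pos, ENNReal.ofReal_ofNat]
    _ ≤ ENNReal.ofReal (r ^ 2) * γ A := mul_le_mul_right hγA _
    _ = ∫⁻ _ in A, ENNReal.ofReal (r ^ 2) ∂γ := (setLIntegral_const A _).symm
    _ ≤ ∫⁻ p in A, ENNReal.ofReal (dist p.1 p.2 ^ 2) ∂γ := setLIntegral_mono hmeas hpt
    _ ≤ ∫⁻ p, ENNReal.ofReal (dist p.1 p.2 ^ 2) ∂γ := setLIntegral_le_lintegral _ _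
end

section
/- Let N ≥ 2, let X_1, …, X_N ∈ ℝ³ be pairwise distinct, let α > 0, C₀ > 0, and let K : ℝ³ ∖ {0} → ℝ³ be differentiable with |K(x)| ≤ C₀ |x|^{−α} and ‖DK(x)‖ ≤ C₀ |x|^{−α−1} for all x ≠ 0. Define Ṽ_i := (1/N) Σ_{j≠i} K(X_i − X_j). Then there exists a constant C, depending only on α, such that for all i ≠ j: |Ṽ_i − Ṽ_j| ≤ C C₀ (S_{α+1}/N) |X_i − X_j|. -/
open scoped BigOperators

/-- The mean-field velocity `Ṽ_i = (1/N) ∑_{j ≠ i} K(X_i - X_j)`. -/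
noncomputable def Vtilde {N : ℕ} (X : Fin N → EuclideanSpace ℝ (Fin 3))
    (K : EuclideanSpace ℝ (Fin 3) → EuclideanSpace ℝ (Fin 3)) (i : Fin N) :
    EuclideanSpace ℝ (Fin 3) :=
  (N : ℝ)⁻¹ • ∑ j ∈ Finset.univ.erase i, K (X i - X j)

lemma aux_pair (α C₀ : ℝ) (hα : 0 < α) (hC₀ : 0 < C₀)
    (K : EuclideanSpace ℝ (Fin 3) → EuclideanSpace ℝ (Fin 3))
    (hdiff : ∀ x, x ≠ 0 → DifferentiableAt ℝ K x)
    (hK : ∀ x, x ≠ 0 → ‖K x‖ ≤ C₀ * ‖x‖ ^ (-α))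
    (hDK : ∀ x, x ≠ 0 → ‖fderiv ℝ K x‖ ≤ C₀ * ‖x‖ ^ (-(α+1)))
    (a b c : EuclideanSpace ℝ (Fin 3)) (hac : a ≠ c) (hbc : b ≠ c) :
    ‖K (a - c) - K (b - c)‖ ≤ ((2:ℝ)^(α+1) + 3) * C₀ *
      ((dist a c) ^ (-(α+1)) + (dist b c) ^ (-(α+1))) * dist a b := by
  have hdac : 0 < dist a c := dist_pos.2 hac
  have hdbc : 0 < dist b c := dist_pos.2 hbc
  have hdab : 0 ≤ dist a b := dist_nonneg
  have hX : 0 ≤ (dist a c) ^ (-(α+1)) := Real.rpow_nonneg hdac.le _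
  have hY : 0 ≤ (dist b c) ^ (-(α+1)) := Real.rpow_nonneg hdbc.le _
  have h2p : (0:ℝ) < (2:ℝ)^(α+1) := Real.rpow_pos_of_pos (by norm_num) _
  by_cases hcase : 2 * dist a b ≤ dist a c
  · -- segment argument
    set M := C₀ * ((dist a c)/2) ^ (-(α+1)) with hM
    have hseg : ∀ x ∈ segment ℝ (a - c) (b - c), (dist a c)/2 ≤ ‖x‖ := by
      rintro x ⟨u, v, hu, hv, huv, rfl⟩
      have hx : u • (a - c) + v • (b - c) - (a - c) = v • (b - a) := by
        have hu1 : u = 1 - v := by linarith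
        rw [hu1]; module
      have h1 : ‖u • (a - c) + v • (b - c) - (a - c)‖ ≤ dist a b := by
        rw [hx, norm_smul]
        have : ‖b - a‖ = dist a b := by rw [dist_eq_norm, norm_sub_rev]
        rw [this, Real.norm_eq_abs, abs_of_nonneg hv]
        nlinarith
      have h2 : ‖a - c‖ = dist a c := (dist_eq_norm a c).symm
      have := norm_sub_norm_le (a - c) (a - c - (u • (a - c) + v • (b - c)))
      have h3 : ‖a - c - (a - c - (u • (a - c) + v • (b - c)))‖ = ‖u • (a - c) + v • (b - c)‖ := by
        congr 1; abel
      rw [h3] at this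
      have h4 : ‖a - c - (u • (a - c) + v • (b - c))‖ = ‖u • (a - c) + v • (b - c) - (a - c)‖ :=
        norm_sub_rev _ _
      rw [h2, h4] at this
      linarith
    have hne : ∀ x ∈ segment ℝ (a - c) (b - c), x ≠ 0 := by
      intro x hx h0
      have := hseg x hx
      rw [h0, norm_zero] at this
      linarith
    have hbound : ∀ x ∈ segment ℝ (a - c) (b - c), ‖fderiv ℝ K x‖ ≤ M := by
      intro x hx
      refine (hDK x (hne x hx)).trans ?_
      have h5 : ((dist a c)/2) ^ (-(α+1)) ≥ ‖x‖ ^ (-(α+1)) :=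
        Real.rpow_le_rpow_of_nonpos (by linarith) (hseg x hx) (by linarith)
      exact mul_le_mul_of_nonneg_left h5 hC₀.le
    have hmv := Convex.norm_image_sub_le_of_norm_fderiv_le
      (fun x hx => hdiff x (hne x hx)) hbound (convex_segment _ _)
      (left_mem_segment ℝ (a - c) (b - c)) (right_mem_segment ℝ (a - c) (b - c))
    have hrw : b - c - (a - c) = b - a := by abel
    rw [hrw] at hmv
    have hba : ‖b - a‖ = dist a b := by rw [dist_eq_norm, norm_sub_rev]
    rw [hba] at hmv
    have hhalf : ((dist a c)/2) ^ (-(α+1)) = 2^(α+1) * (dist a c) ^ (-(α+1)) := by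
      rw [Real.div_rpow hdac.le (by norm_num), Real.rpow_neg (by norm_num : (0:ℝ) ≤ 2),
        div_eq_mul_inv, inv_inv]
      ring
    rw [norm_sub_rev]
    refine hmv.trans ?_
    rw [hM, hhalf]
    nlinarith [mul_nonneg hX hdab, mul_nonneg hY hdab, mul_nonneg (mul_nonneg hX hdab) hC₀.le,
      mul_nonneg (mul_nonneg hY hdab) hC₀.le]
  · -- bound each term separately
    push_neg at hcase
    have hdab' : 0 < dist a b := by nlinarith
    have hne1 : a - c ≠ 0 := sub_ne_zero.2 hac
    have hne2 : b - c ≠ 0 := sub_ne_zero.2 hbc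
    have e1 : ‖a - c‖ = dist a c := (dist_eq_norm a c).symm
    have e2 : ‖b - c‖ = dist b c := (dist_eq_norm b c).symm
    have k1 := hK _ hne1
    have k2 := hK _ hne2
    rw [e1] at k1; rw [e2] at k2
    have hsplit : ∀ d : ℝ, 0 < d → d ^ (-α) = d ^ (-(α+1)) * d := by
      intro d hd
      rw [show (-α) = (-(α+1)) + 1 by ring, Real.rpow_add hd, Real.rpow_one]
    rw [hsplit _ hdac] at k1
    rw [hsplit _ hdbc] at k2
    have htri : dist b c ≤ dist a b + dist a c := by
      have := dist_triangle b a c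
      rw [dist_comm b a] at this; linarith
    have hbc3 : dist b c ≤ 3 * dist a b := by linarith
    calc ‖K (a - c) - K (b - c)‖ ≤ ‖K (a - c)‖ + ‖K (b - c)‖ := norm_sub_le _ _
      _ ≤ C₀ * ((dist a c) ^ (-(α+1)) * dist a c) + C₀ * ((dist b c) ^ (-(α+1)) * dist b c) := by
          linarith
      _ ≤ ((2:ℝ)^(α+1) + 3) * C₀ * ((dist a c) ^ (-(α+1)) + (dist b c) ^ (-(α+1))) * dist a b := by
          nlinarith [mul_nonneg hX hdab'.le, mul_nonneg hY hdab'.le,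
            mul_le_mul_of_nonneg_left hcase.le hX, mul_le_mul_of_nonneg_left hbc3 hY,
            mul_nonneg (mul_nonneg hX hdab'.le) hC₀.le, mul_nonneg (mul_nonneg hY hdab'.le) hC₀.le]

lemma dd_nonneg {N : ℕ} (X : Fin N → EuclideanSpace ℝ (Fin 3)) (i j : Fin N) :
    0 ≤ dd X i j := by
  unfold dd
  split
  · exact Real.sInf_nonneg (by rintro x ⟨i, j, -, rfl⟩; exact dist_nonneg)
  · exact dist_nonneg

lemma sum_le_Ssum {N : ℕ} [NeZero N] (X : Fin N → EuclideanSpace ℝ (Fin 3)) (β : ℝ) (i : Fin N) :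
    ∑ j : Fin N, (dd X i j) ^ (-β) ≤ Ssum X β := by
  unfold Ssum
  exact le_ciSup (Set.Finite.bddAbove
    (Set.finite_range fun i : Fin N => ∑ j : Fin N, (dd X i j) ^ (-β))) i

/-- For a kernel `K` with `|K(x)| ≤ C₀|x|^{-α}` and `‖DK(x)‖ ≤ C₀|x|^{-α-1}` there is a
constant `C`, depending only on `α`, such that for all pairwise distinct configurations
and all `i ≠ j`: `|Ṽ_i - Ṽ_j| ≤ C C₀ (S_{α+1}/N) |X_i - X_j|`. -/
theorem stmt7 (α : ℝ) (hα : 0 < α) :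
    ∃ C : ℝ, ∀ (N : ℕ), 2 ≤ N →
      ∀ X : Fin N → EuclideanSpace ℝ (Fin 3), Function.Injective X →
        ∀ (C₀ : ℝ), 0 < C₀ →
          ∀ K : EuclideanSpace ℝ (Fin 3) → EuclideanSpace ℝ (Fin 3),
            (∀ x : EuclideanSpace ℝ (Fin 3), x ≠ 0 → DifferentiableAt ℝ K x) →
            (∀ x : EuclideanSpace ℝ (Fin 3), x ≠ 0 → ‖K x‖ ≤ C₀ * ‖x‖ ^ (-α)) →
            (∀ x : EuclideanSpace ℝ (Fin 3), x ≠ 0 →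
              ‖fderiv ℝ K x‖ ≤ C₀ * ‖x‖ ^ (-(α + 1))) →
            ∀ i j : Fin N, i ≠ j →
              ‖Vtilde X K i - Vtilde X K j‖ ≤
                C * C₀ * (Ssum X (α + 1) / N) * ‖X i - X j‖ := by
  refine ⟨2 * ((2:ℝ)^(α+1) + 3), ?_⟩
  intro N hN X hX C₀ hC₀ K hdiff hK hDK i j hij
  have : NeZero N := ⟨by omega⟩
  set A : ℝ := (2:ℝ)^(α+1) + 3 with hA
  have h2p : (0:ℝ) < (2:ℝ)^(α+1) := Real.rpow_pos_of_pos (by norm_num) _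
  have hA3 : 3 ≤ A := by rw [hA]; linarith
  have hApos : 0 < A := by linarith
  have hNpos : (0:ℝ) < N := by positivity
  set dij : ℝ := dist (X i) (X j) with hdij
  have hdijpos : 0 < dij := dist_pos.2 fun h => hij (hX h)
  set s : Finset (Fin N) := (Finset.univ.erase i).erase j with hs
  have hji : j ∈ Finset.univ.erase i := Finset.mem_erase.2 ⟨hij.symm, Finset.mem_univ j⟩
  have hij' : i ∈ Finset.univ.erase j := Finset.mem_erase.2 ⟨hij, Finset.mem_univ i⟩
  have hs' : s = (Finset.univ.erase j).erase i := by rw [hs, Finset.erase_right_comm]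
  have hsum1 : ∑ k ∈ Finset.univ.erase i, K (X i - X k)
      = K (X i - X j) + ∑ k ∈ s, K (X i - X k) := by
    conv_lhs => rw [← Finset.insert_erase hji]
    rw [Finset.sum_insert (Finset.notMem_erase j _)]
  have hsum2 : ∑ k ∈ Finset.univ.erase j, K (X j - X k)
      = K (X j - X i) + ∑ k ∈ s, K (X j - X k) := by
    conv_lhs => rw [← Finset.insert_erase hij']
    rw [Finset.sum_insert (Finset.notMem_erase i _), ← hs']
  have hV : Vtilde X K i - Vtilde X K j
      = (N : ℝ)⁻¹ • (K (X i - X j) - K (X j - X i)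
        + ∑ k ∈ s, (K (X i - X k) - K (X j - X k))) := by
    rw [Vtilde, Vtilde, ← smul_sub, hsum1, hsum2, Finset.sum_sub_distrib]
    congr 1
    abel
  have memne : ∀ k ∈ s, k ≠ i ∧ k ≠ j := by
    intro k hk
    rw [hs] at hk
    exact ⟨(Finset.mem_erase.1 (Finset.mem_of_mem_erase hk)).1,
      (Finset.mem_erase.1 hk).1⟩
  have hXne : ∀ k l : Fin N, k ≠ l → X k ≠ X l := fun k l h hc => h (hX hc)
  have hterm : ∀ k ∈ s, ‖K (X i - X k) - K (X j - X k)‖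
      ≤ A * C₀ * ((dist (X i) (X k)) ^ (-(α+1)) + (dist (X j) (X k)) ^ (-(α+1))) * dij := by
    intro k hk
    obtain ⟨hki, hkj⟩ := memne k hk
    exact aux_pair α C₀ hα hC₀ K hdiff hK hDK (X i) (X j) (X k)
      (hXne i k (Ne.symm hki)) (hXne j k (Ne.symm hkj))
  have hKij : ‖K (X i - X j)‖ ≤ C₀ * (dij ^ (-(α+1)) * dij) := by
    have h1 := hK _ (sub_ne_zero.2 (hXne i j hij))
    rw [show ‖X i - X j‖ = dij by rw [hdij, dist_eq_norm]] at h1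
    rw [show dij ^ (-(α+1)) * dij = dij ^ (-α) by
      rw [show (-α) = (-(α+1)) + 1 by ring, Real.rpow_add hdijpos, Real.rpow_one]]
    exact h1
  have hKji : ‖K (X j - X i)‖ ≤ C₀ * (dij ^ (-(α+1)) * dij) := by
    have h1 := hK _ (sub_ne_zero.2 (hXne j i hij.symm))
    rw [show ‖X j - X i‖ = dij by rw [hdij, dist_eq_norm, norm_sub_rev]] at h1
    rw [show dij ^ (-(α+1)) * dij = dij ^ (-α) by
      rw [show (-α) = (-(α+1)) + 1 by ring, Real.rpow_add hdijpos, Real.rpow_one]]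
    exact h1
  set P : ℝ := dij ^ (-(α+1)) with hP
  set Q1 : ℝ := ∑ k ∈ s, (dist (X i) (X k)) ^ (-(α+1)) with hQ1
  set Q2 : ℝ := ∑ k ∈ s, (dist (X j) (X k)) ^ (-(α+1)) with hQ2
  have hPn : 0 ≤ P := Real.rpow_nonneg hdijpos.le _
  have hQ1n : 0 ≤ Q1 := Finset.sum_nonneg fun k _ => Real.rpow_nonneg dist_nonneg _
  have hQ2n : 0 ≤ Q2 := Finset.sum_nonneg fun k _ => Real.rpow_nonneg dist_nonneg _
  have hSi : P + Q1 ≤ Ssum X (α+1) := by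
    have h1 : P + Q1 = ∑ k ∈ Finset.univ.erase i, (dd X i k) ^ (-(α+1)) := by
      conv_rhs => rw [← Finset.insert_erase hji]
      rw [Finset.sum_insert (Finset.notMem_erase j _), ← hs, hP, hQ1]
      congr 1
      · rw [dd, if_neg hij]
      · exact Finset.sum_congr rfl fun k hk => by
          rw [dd, if_neg (Ne.symm (memne k hk).1)]
    rw [h1]
    refine le_trans (Finset.sum_le_sum_of_subset_of_nonneg (Finset.subset_univ _) ?_)
      (sum_le_Ssum X (α+1) i)
    intro k _ _
    exact Real.rpow_nonneg (dd_nonneg X i k) _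
  have hSj : P + Q2 ≤ Ssum X (α+1) := by
    have h1 : P + Q2 = ∑ k ∈ Finset.univ.erase j, (dd X j k) ^ (-(α+1)) := by
      conv_rhs => rw [← Finset.insert_erase hij']
      rw [Finset.sum_insert (Finset.notMem_erase i _), ← hs', hP, hQ2]
      congr 1
      · rw [dd, if_neg hij.symm, hdij, dist_comm]
      · exact Finset.sum_congr rfl fun k hk => by
          rw [dd, if_neg (Ne.symm (memne k hk).2)]
    rw [h1]
    refine le_trans (Finset.sum_le_sum_of_subset_of_nonneg (Finset.subset_univ _) ?_)
      (sum_le_Ssum X (α+1) j)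
    intro k _ _
    exact Real.rpow_nonneg (dd_nonneg X j k) _
  have key : ∑ k ∈ s, A * C₀ * ((dist (X i) (X k)) ^ (-(α+1))
      + (dist (X j) (X k)) ^ (-(α+1))) * dij = A * C₀ * dij * (Q1 + Q2) := by
    rw [hQ1, hQ2, ← Finset.sum_add_distrib, Finset.mul_sum]
    exact Finset.sum_congr rfl fun k _ => by ring
  have hnorm : ‖K (X i - X j) - K (X j - X i) + ∑ k ∈ s, (K (X i - X k) - K (X j - X k))‖
      ≤ A * C₀ * (2 * Ssum X (α+1)) * dij := by
    calc ‖K (X i - X j) - K (X j - X i) + ∑ k ∈ s, (K (X i - X k) - K (X j - X k))‖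
        ≤ ‖K (X i - X j)‖ + ‖K (X j - X i)‖
          + ∑ k ∈ s, ‖K (X i - X k) - K (X j - X k)‖ := by
          refine le_trans (norm_add_le _ _) ?_
          exact add_le_add (norm_sub_le _ _) (norm_sum_le _ _)
      _ ≤ C₀ * (P * dij) + C₀ * (P * dij)
          + ∑ k ∈ s, A * C₀ * ((dist (X i) (X k)) ^ (-(α+1))
            + (dist (X j) (X k)) ^ (-(α+1))) * dij :=
          add_le_add (add_le_add hKij hKji) (Finset.sum_le_sum hterm)
      _ = 2 * (C₀ * (P * dij)) + A * C₀ * dij * (Q1 + Q2) := by rw [key]; ring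
      _ ≤ A * C₀ * (2 * Ssum X (α+1)) * dij := by
          have m1 : A * C₀ * dij * (P + Q1) ≤ A * C₀ * dij * Ssum X (α+1) :=
            mul_le_mul_of_nonneg_left hSi (by positivity)
          have m2 : A * C₀ * dij * (P + Q2) ≤ A * C₀ * dij * Ssum X (α+1) :=
            mul_le_mul_of_nonneg_left hSj (by positivity)
          nlinarith [mul_nonneg (mul_nonneg (mul_nonneg (by linarith : (0:ℝ) ≤ A - 1) hC₀.le)
            hdijpos.le) hPn]
  have hfinal : ‖Vtilde X K i - Vtilde X K j‖
      ≤ (N:ℝ)⁻¹ * (A * C₀ * (2 * Ssum X (α+1)) * dij) := by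
    rw [hV, norm_smul, Real.norm_eq_abs, abs_of_nonneg (by positivity)]
    exact mul_le_mul_of_nonneg_left hnorm (by positivity)
  refine hfinal.trans_eq ?_
  rw [show ‖X i - X j‖ = dij by rw [hdij, dist_eq_norm], div_eq_mul_inv]
  ring
end

section
/- Fix N ∈ ℕ, R > 0, λ > 0, T > 0 and g ∈ ℝ³ with |g| = 1, and set L := (2/5) R². Let U ⊆ (ℝ³)^N be open and let 𝓡 : U → ℝ^{6N×6N} be a C¹ map whose values are symmetric positive definite matrices; set 𝓡̃(Y) := M 𝓡(Y) M. Let X, V, Ω : [0,T] → (ℝ³)^N be C¹ with X(t) ∈ U for all t, Ẋ(t) = V(t), and (V̇(t), L Ω̇(t)) = λ ((ḡ, 0) − N 𝓡(X(t)) (V(t), Ω(t))) for all t ∈ [0,T]. Define (Ṽ(t), Ω̃(t)) := 𝓡(X(t))^{−1} (ḡ, 0) / N, let c := inf_{t∈[0,T]} min_{|A|₂=1} A · 𝓡̃(X(t)) A, and let G := sup_{t∈[0,T]} of the operator norm of the derivative at X(t) of the map Y ↦ 𝓡̃(Y)^{−1} (ḡ, 0) from (ℝ³)^N to ℝ^{6N}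 (both with Euclidean norms). Assume c > 0 and λ ≥ 2G/(N² c). Then for all t ∈ [0,T]: |(V − Ṽ, L^{1/2}(Ω − Ω̃))(t)|₂ ≤ |(V − Ṽ, L^{1/2}(Ω − Ω̃))(0)|₂ e^{−λNct/2} + (2√2 G / (λ N^{5/2} c²)) (1 − e^{−λNct/2}). -/
open scoped RealInnerProductSpace

noncomputable section

/-- The space `(ℝ³)^N` of particle positions (or velocities). -/
abbrev PosSp (N : ℕ) := EuclideanSpace ℝ (Fin N × Fin 3)

/-- The space `ℝ^{6N}` of pairs `(W, Z)` of translational and angular velocities. -/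
abbrev VSp (N : ℕ) := EuclideanSpace ℝ ((Fin N × Fin 3) ⊕ (Fin N × Fin 3))

/-- The pair `(W, Z) ∈ ℝ^{6N}` of two vectors `W, Z ∈ (ℝ³)^N`. -/
def pairVec {N : ℕ} (W Z : PosSp N) : VSp N :=
  WithLp.toLp 2 (fun x => match x with
  | Sum.inl p => W p
  | Sum.inr p => Z p)

/-- The vector `(ḡ, 0) = (g, …, g, 0, …, 0) ∈ ℝ^{6N}`. -/
def gbar (N : ℕ) (g : EuclideanSpace ℝ (Fin 3)) : VSp N :=
  WithLp.toLp 2 (fun x => match x with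
  | Sum.inl p => g p.2
  | Sum.inr _ => 0)

/-- The block-diagonal matrix `M` acting by `M (W, Z) = (W, L^{-1/2} Z)`. -/
def Mvec {N : ℕ} (L : ℝ) (v : VSp N) : VSp N :=
  WithLp.toLp 2 (fun x => match x with
  | Sum.inl p => v (Sum.inl p)
  | Sum.inr p => (Real.sqrt L)⁻¹ * v (Sum.inr p))

/-!
With `𝓡̃ = M 𝓡 M` and `Φ(Y) = 𝓡̃(Y)⁻¹ (ḡ, 0)`, the modulated velocity
`y = (V, √L Ω) - Φ(X)/N` is exactly `(V - Ṽ, √L (Ω - Ω̃))`, and Newton's equations become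
`y' = -λN 𝓡̃(X) y - DΦ(X) V / N`. Coercivity of `𝓡̃` gives `‖Φ(X)‖ ≤ ‖ḡ‖/c = √N/c`, hence
`‖V‖ ≤ ‖y‖ + 1/(√N c)`, so that
`⟪y, y'⟫ ≤ -λNc ‖y‖² + (G/N) ‖y‖ (‖y‖ + 1/(√N c)) ≤ -(λNc/2) ‖y‖² + G/(N^{3/2} c) ‖y‖`
as soon as `λ ≥ 2G/(N²c)`. A Grönwall argument for `‖y‖` turns this into exponential relaxation
at rate `λNc/2` towards the level `2G/(λ N^{5/2} c²)`. `G` is finite because `Φ` solves a `C¹`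
family of invertible linear systems and is therefore `C¹`.
-/

open Set

section Gronwall

variable {E : Type*} [NormedAddCommGroup E] [InnerProductSpace ℝ E]

theorem norm_le_of_inner_deriv_le {y y' : ℝ → E} {a b K ε : ℝ} (hK : 0 < K) (hε : 0 ≤ ε)
    (hy : ∀ t ∈ Icc a b, HasDerivWithinAt y (y' t) (Icc a b) t)
    (hbound : ∀ t ∈ Icc a b, ⟪y t, y' t⟫ ≤ -K * ‖y t‖ ^ 2 + ε * ‖y t‖) :
    ∀ t ∈ Icc a b, ‖y t‖ ≤
      ‖y a‖ * Real.exp (-(K * (t - a))) + ε / K * (1 - Real.exp (-(K * (t - a)))) := by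
  intro t ht
  refine le_of_forall_pos_le_add fun η hη => ?_
  -- `‖y‖` has a kink at `0`; its smooth majorant `√(‖y‖² + η²)` satisfies a linear inequality.
  set f : ℝ → ℝ := fun s => √(‖y s‖ ^ 2 + η ^ 2)
  have hf_pos : ∀ s, 0 < f s := fun s => Real.sqrt_pos.2 (by positivity)
  have hf_sq : ∀ s, f s ^ 2 = ‖y s‖ ^ 2 + η ^ 2 := fun s => Real.sq_sqrt (by positivity)
  have hy_le : ∀ s, ‖y s‖ ≤ f s := fun s =>
    Real.le_sqrt_of_sq_le (le_add_of_nonneg_right (sq_nonneg η))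
  have hη_le : ∀ s, η ≤ f s := fun s =>
    Real.le_sqrt_of_sq_le (le_add_of_nonneg_left (sq_nonneg ‖y s‖))
  have hf_deriv : ∀ s ∈ Icc a b, HasDerivWithinAt f (⟪y s, y' s⟫ / f s) (Icc a b) s := by
    intro s hs
    convert ((hy s hs).norm_sq.add_const (η ^ 2)).sqrt (by positivity) using 1
    exact (mul_div_mul_left _ (f s) two_ne_zero).symm
  have hf_bound : ∀ s ∈ Icc a b, ⟪y s, y' s⟫ / f s ≤ -K * f s + (ε + K * η) := by
    intro s hs
    rw [div_le_iff₀ (hf_pos s)]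
    nlinarith [hbound s hs, hf_sq s, mul_le_mul_of_nonneg_left (hy_le s) hε,
      mul_le_mul_of_nonneg_left (hη_le s) (mul_nonneg hK.le hη.le)]
  have hf0 : f a ≤ ‖y a‖ + η := Real.sqrt_le_iff.2 ⟨by positivity, by nlinarith [norm_nonneg (y a)]⟩
  have hgron := le_gronwallBound_of_liminf_deriv_right_le (K := -K)
    (fun s hs => (hf_deriv s hs).continuousWithinAt)
    (fun s hs r hr => ((hf_deriv s (Ico_subset_Icc_self hs)).mono_of_mem_nhdsWithin
      (Icc_mem_nhdsGE_of_mem hs)).liminf_right_slope_le hr)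
    hf0 (fun s hs => hf_bound s (Ico_subset_Icc_self hs)) t ht
  rw [gronwallBound_of_K_ne_0 (neg_ne_zero.2 hK.ne')] at hgron
  calc ‖y t‖ ≤ f t := hy_le t
    _ ≤ _ := hgron
    _ = _ := by field_simp; ring

end Gronwall

theorem nontrivial_of_sInf_pos {E ι : Type*} [SeminormedAddCommGroup E] {q : ι → E → ℝ} {s : Set ι}
    (h : 0 < sInf {r : ℝ | ∃ i ∈ s, ∃ A : E, ‖A‖ = 1 ∧ r = q i A}) : Nontrivial E := by
  by_contra hE
  rw [not_nontrivial_iff_subsingleton] at hE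
  have hempty : {r : ℝ | ∃ i ∈ s, ∃ A : E, ‖A‖ = 1 ∧ r = q i A} = ∅ := by
    refine Set.eq_empty_of_forall_notMem ?_
    rintro r ⟨i, -, A, hA, -⟩
    simp [Subsingleton.elim A 0] at hA
  rw [hempty, Real.sInf_empty] at h
  exact h.false

section Coercive

variable {E : Type*} [NormedAddCommGroup E] [InnerProductSpace ℝ E]

theorem mul_norm_sq_le_inner_of_sInf {ι : Type*} {B : ι → E →L[ℝ] E} {s : Set ι}
    (hB : ∀ i ∈ s, ∀ v, v ≠ 0 → 0 < ⟪v, B i v⟫) {i : ι} (hi : i ∈ s) (w : E) :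
    sInf {r : ℝ | ∃ i ∈ s, ∃ A : E, ‖A‖ = 1 ∧ r = ⟪A, B i A⟫} * ‖w‖ ^ 2 ≤ ⟪w, B i w⟫ := by
  rcases eq_or_ne w 0 with rfl | hw
  · simp
  have hbdd : BddBelow {r : ℝ | ∃ i ∈ s, ∃ A : E, ‖A‖ = 1 ∧ r = ⟪A, B i A⟫} := by
    refine ⟨0, ?_⟩
    rintro r ⟨j, hj, A, hA, rfl⟩
    exact (hB j hj A (norm_ne_zero_iff.1 (hA ▸ one_ne_zero))).le
  have h := csInf_le hbdd ⟨i, hi, ‖w‖⁻¹ • w, norm_smul_inv_norm hw, rfl⟩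
  rwa [map_smul, real_inner_smul_left, real_inner_smul_right, ← mul_assoc, ← sq, inv_pow,
    inv_mul_eq_div, le_div_iff₀ (by positivity)] at h

theorem norm_le_div_of_mul_norm_sq_le_inner {c : ℝ} (hc : 0 < c) {w v : E}
    (h : c * ‖w‖ ^ 2 ≤ ⟪w, v⟫) : ‖w‖ ≤ ‖v‖ / c := by
  rw [le_div_iff₀ hc]
  nlinarith [real_inner_le_norm w v, norm_nonneg w, norm_nonneg v]

theorem injective_of_inner_map_self_pos {A : E →L[ℝ] E} (h : ∀ v, v ≠ 0 → 0 < ⟪v, A v⟫) :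
    Function.Injective A := by
  refine (injective_iff_map_eq_zero A).2 fun v hv => ?_
  by_contra hne
  simpa [hv] using h v hne

theorem contDiffOn_of_apply_eq {P F : Type*} [NormedAddCommGroup P] [NormedSpace ℝ P]
    [NormedAddCommGroup F] [NormedSpace ℝ F] [FiniteDimensional ℝ F] {n : WithTop ℕ∞}
    {U : Set P} (hU : IsOpen U) {A : P → F →L[ℝ] F} (hA : ContDiffOn ℝ n A U)
    (hinj : ∀ Y ∈ U, Function.Injective (A Y)) {Φ : P → F} {v : F}
    (hΦ : ∀ Y ∈ U, A Y (Φ Y) = v) : ContDiffOn ℝ n Φ U := by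
  have hunit : ∀ Y ∈ U, IsUnit (A Y) := fun Y hY =>
    ContinuousLinearMap.isUnit_iff_bijective.2
      ⟨hinj Y hY, LinearMap.injective_iff_surjective.1 (hinj Y hY)⟩
  have hinv : ContDiffOn ℝ n (fun Y => Ring.inverse (A Y)) U := fun Y hY => by
    obtain ⟨u, hu⟩ := hunit Y hY
    exact ((hu ▸ contDiffAt_ringInverse ℝ u).comp Y
      ((hA Y hY).contDiffAt (hU.mem_nhds hY))).contDiffWithinAt
  refine (hinv.clm_apply (contDiffOn_const (c := v))).congr fun Y hY => hinj Y hY ?_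
  rw [hΦ Y hY]
  exact (congrArg (· v) (Ring.mul_inverse_cancel _ (hunit Y hY))).symm

theorem le_sSup_of_continuousOn {α : Type*} [TopologicalSpace α] {K : Set α} (hK : IsCompact K)
    {f : α → ℝ} (hf : ContinuousOn f K) {t : α} (ht : t ∈ K) :
    f t ≤ sSup {r : ℝ | ∃ s ∈ K, r = f s} := by
  have hset : {r : ℝ | ∃ s ∈ K, r = f s} = f '' K := by
    ext r; simp [eq_comm]
  rw [hset]
  exact le_csSup (hK.bddAbove_image hf) (mem_image_of_mem f ht)

end Coercive

section Particles

variable {N : ℕ} {L : ℝ}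

theorem pairVec_sub (W₁ W₂ Z₁ Z₂ : PosSp N) :
    pairVec (W₁ - W₂) (Z₁ - Z₂) = pairVec W₁ Z₁ - pairVec W₂ Z₂ := by
  ext x; cases x <;> rfl

theorem norm_le_norm_pairVec_left (W Z : PosSp N) : ‖W‖ ≤ ‖pairVec W Z‖ := by
  have h : ‖pairVec W Z‖ ^ 2 = ‖W‖ ^ 2 + ‖Z‖ ^ 2 := by
    simp only [← real_inner_self_eq_norm_sq, PiLp.inner_apply, Fintype.sum_sum_type]
    rfl
  exact (sq_le_sq₀ (norm_nonneg _) (norm_nonneg _)).1 (by rw [h]; linarith [sq_nonneg ‖Z‖])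

def pairVecL (N : ℕ) : PosSp N × PosSp N →L[ℝ] VSp N :=
  LinearMap.toContinuousLinearMap
    { toFun := fun p => pairVec p.1 p.2
      map_add' := fun _ _ => by ext x; cases x <;> rfl
      map_smul' := fun _ _ => by ext x; cases x <;> rfl }

theorem HasDerivWithinAt.pairVec {W Z : ℝ → PosSp N} {W' Z' : PosSp N} {s : Set ℝ} {t : ℝ}
    (hW : HasDerivWithinAt W W' s t) (hZ : HasDerivWithinAt Z Z' s t) :
    HasDerivWithinAt (fun τ => _root_.pairVec (W τ) (Z τ)) (_root_.pairVec W' Z') s t :=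
  (pairVecL N).hasFDerivAt.comp_hasDerivWithinAt t (hW.prodMk hZ)

theorem norm_gbar (g : EuclideanSpace ℝ (Fin 3)) : ‖gbar N g‖ = √N * ‖g‖ := by
  have h : ‖gbar N g‖ ^ 2 = N * ‖g‖ ^ 2 := by
    simp only [← real_inner_self_eq_norm_sq, PiLp.inner_apply, Fintype.sum_sum_type, gbar,
      Fintype.sum_prod_type]
    simp
  rw [← Real.sqrt_sq (norm_nonneg _), h, Real.sqrt_mul (Nat.cast_nonneg _),
    Real.sqrt_sq (norm_nonneg _)]

def MvecL (N : ℕ) (L : ℝ) : VSp N →L[ℝ] VSp N :=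
  LinearMap.toContinuousLinearMap
    { toFun := Mvec L
      map_add' := fun _ _ => by ext x; cases x <;> simp [Mvec, mul_add]
      map_smul' := fun _ _ => by ext x; cases x <;> simp [Mvec, mul_left_comm] }

theorem MvecL_apply (v : VSp N) : MvecL N L v = Mvec L v := rfl

theorem Mvec_smul (a : ℝ) (v : VSp N) : Mvec L (a • v) = a • Mvec L v :=
  map_smul (MvecL N L) a v

theorem inner_Mvec_left (u v : VSp N) : ⟪Mvec L u, v⟫ = ⟪u, Mvec L v⟫ := by
  simp only [PiLp.inner_apply, Fintype.sum_sum_type, Mvec, RCLike.inner_apply, conj_trivial]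
  congr 1
  exact Finset.sum_congr rfl fun _ _ => by ring

theorem Mvec_injective (hL : 0 < L) : Function.Injective (Mvec (N := N) L) := by
  intro u v h
  ext (p | p)
  · exact congrArg (· (Sum.inl p)) h
  · exact mul_left_cancel₀ (inv_ne_zero (Real.sqrt_pos.2 hL).ne') (congrArg (· (Sum.inr p)) h)

theorem Mvec_gbar (g : EuclideanSpace ℝ (Fin 3)) : Mvec L (gbar N g) = gbar N g := by
  ext x; cases x <;> simp [Mvec, gbar]

theorem Mvec_pairVec_sqrt_smul (hL : 0 < L) (W Z : PosSp N) :
    Mvec L (pairVec W (√L • Z)) = pairVec W Z := by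
  ext (p | p)
  · rfl
  · exact inv_mul_cancel_left₀ (Real.sqrt_pos.2 hL).ne' (Z p)

theorem Mvec_pairVec_smul (hL : 0 < L) (W Z : PosSp N) :
    Mvec L (pairVec W (L • Z)) = pairVec W (√L • Z) := by
  rw [← Mvec_pairVec_sqrt_smul hL W (√L • Z), smul_smul, Real.mul_self_sqrt hL.le]

/-- `𝓡̃(Y) = M 𝓡(Y) M` is `conjM L (𝓡 Y)`. -/
def conjM (L : ℝ) (A : VSp N →L[ℝ] VSp N) : VSp N →L[ℝ] VSp N :=
  (MvecL N L).comp (A.comp (MvecL N L))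

theorem conjM_apply (A : VSp N →L[ℝ] VSp N) (v : VSp N) :
    conjM L A v = Mvec L (A (Mvec L v)) := rfl

theorem inner_conjM_pos (hL : 0 < L) {A : VSp N →L[ℝ] VSp N}
    (hA : ∀ v, v ≠ 0 → 0 < ⟪v, A v⟫) (v : VSp N) (hv : v ≠ 0) : 0 < ⟪v, conjM L A v⟫ := by
  rw [conjM_apply, ← inner_Mvec_left]
  refine hA _ fun h => hv (Mvec_injective hL ?_)
  rw [h, ← MvecL_apply, map_zero]

theorem pos_of_nontrivial_VSp [Nontrivial (VSp N)] : 0 < N := by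
  obtain ⟨v, hv⟩ := exists_ne (0 : VSp N)
  refine Nat.pos_of_ne_zero fun hN => hv ?_
  subst hN
  ext (p | p) <;> exact p.1.elim0

theorem eq_smul_pairVec_of_conjM_apply (hL : 0 < L) (hN : (N : ℝ) ≠ 0)
    {A : VSp N →L[ℝ] VSp N} (hA : Function.Injective A) {g : EuclideanSpace ℝ (Fin 3)}
    {φ : VSp N} {W Z : PosSp N} (hφ : conjM L A φ = gbar N g)
    (hWZ : A (pairVec W Z) = (N : ℝ)⁻¹ • gbar N g) : φ = (N : ℝ) • pairVec W (√L • Z) := by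
  apply Mvec_injective hL
  rw [Mvec_smul, Mvec_pairVec_sqrt_smul hL]
  apply hA
  rw [map_smul, hWZ, smul_inv_smul₀ hN]
  apply Mvec_injective hL
  rw [← conjM_apply, hφ, Mvec_gbar]

theorem newton_modulated (hL : 0 < L) (hN : (N : ℝ) ≠ 0) {A : VSp N →L[ℝ] VSp N}
    {g : EuclideanSpace ℝ (Fin 3)} {lam : ℝ} {V Ω V' Ω' Vt Ωt : PosSp N}
    (hNewton : pairVec V' (L • Ω') = lam • (gbar N g - (N : ℝ) • A (pairVec V Ω)))
    (hVt : A (pairVec Vt Ωt) = (N : ℝ)⁻¹ • gbar N g) :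
    pairVec V' (√L • Ω') = -((lam * N) • conjM L A (pairVec (V - Vt) (√L • (Ω - Ωt)))) := by
  rw [← Mvec_pairVec_smul hL, hNewton, conjM_apply, Mvec_pairVec_sqrt_smul hL, pairVec_sub,
    map_sub, hVt]
  simp only [← MvecL_apply, map_sub, map_smul]
  rw [MvecL_apply, Mvec_gbar]
  match_scalars <;> field_simp

theorem norm_le_norm_pairVec_sub_smul_add {W Z : PosSp N} {φ : VSp N} {κ b : ℝ} (hκ : 0 ≤ κ)
    (hφ : ‖φ‖ ≤ b) : ‖W‖ ≤ ‖pairVec W Z - κ • φ‖ + κ * b :=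
  calc ‖W‖ ≤ ‖pairVec W Z - κ • φ + κ • φ‖ := by
        simpa only [sub_add_cancel] using norm_le_norm_pairVec_left W Z
    _ ≤ ‖pairVec W Z - κ • φ‖ + κ * b := by
        grw [norm_add_le, norm_smul, Real.norm_of_nonneg hκ, hφ]

theorem hasDerivWithinAt_pairVec_sub_smul_comp {W Z X : ℝ → PosSp N} {W' Z' X' : PosSp N}
    {Φ : PosSp N → VSp N} {κ : ℝ} {s : Set ℝ} {t : ℝ} (hW : HasDerivWithinAt W W' s t)
    (hZ : HasDerivWithinAt Z Z' s t) (hX : HasDerivWithinAt X X' s t)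
    (hΦ : DifferentiableAt ℝ Φ (X t)) :
    HasDerivWithinAt (fun τ => pairVec (W τ) (Z τ) - κ • Φ (X τ))
      (pairVec W' Z' - κ • fderiv ℝ Φ (X t) X') s t :=
  (hW.pairVec hZ).sub ((hΦ.hasFDerivAt.comp_hasDerivWithinAt t hX).const_smul κ)

end Particles

theorem inner_neg_smul_sub_smul_le {E P : Type*} [NormedAddCommGroup E] [InnerProductSpace ℝ E]
    [NormedAddCommGroup P] [NormedSpace ℝ P] {B : E →L[ℝ] E} {D : P →L[ℝ] E} {y : E} {v : P}
    {a c κ G β K : ℝ} (ha : 0 ≤ a) (hκ : 0 ≤ κ) (hD : ‖D‖ ≤ G)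
    (hB : c * ‖y‖ ^ 2 ≤ ⟪y, B y⟫) (hv : ‖v‖ ≤ ‖y‖ + β) (hK : K ≤ a * c - κ * G) :
    ⟪y, -(a • B y) - κ • D v⟫ ≤ -K * ‖y‖ ^ 2 + κ * G * β * ‖y‖ := by
  have hDv : ‖D v‖ ≤ G * (‖y‖ + β) :=
    (D.le_opNorm v).trans (mul_le_mul hD hv (norm_nonneg v) ((norm_nonneg D).trans hD))
  have hyDv : -⟪y, D v⟫ ≤ ‖y‖ * (G * (‖y‖ + β)) :=
    (neg_le_abs _).trans ((abs_real_inner_le_norm y (D v)).trans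
      (mul_le_mul_of_nonneg_left hDv (norm_nonneg y)))
  rw [inner_sub_right, inner_neg_right, real_inner_smul_right, real_inner_smul_right]
  nlinarith [mul_le_mul_of_nonneg_left hB ha, mul_le_mul_of_nonneg_left hyDv hκ,
    mul_le_mul_of_nonneg_right hK (sq_nonneg ‖y‖)]

theorem half_le_sub_of_two_mul_div_le {N lam c G : ℝ} (hN : 0 < N) (hc : 0 < c)
    (h : 2 * G / (N ^ 2 * c) ≤ lam) : lam * N * c / 2 ≤ lam * N * c - N⁻¹ * G := by
  rw [div_le_iff₀ (by positivity)] at h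
  have key : lam * N * c - N⁻¹ * G - lam * N * c / 2 = (lam * (N ^ 2 * c) - 2 * G) / (2 * N) := by
    field_simp
    ring
  exact sub_nonneg.1 (key ▸ div_nonneg (by linarith) (by positivity))

theorem modulated_constant_le {N lam c G : ℝ} (hN : 0 < N) (hlam : 0 < lam) (hc : 0 < c)
    (hG : 0 ≤ G) :
    N⁻¹ * G * (N⁻¹ * (√N / c)) / (lam * N * c / 2) ≤
      2 * √2 * G / (lam * N ^ ((5 : ℝ) / 2) * c ^ 2) := by
  have hpow : N ^ ((5 : ℝ) / 2) = N ^ 2 * √N := by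
    rw [show (5 : ℝ) / 2 = (2 : ℕ) + 1 / 2 by norm_num, Real.rpow_add hN, Real.rpow_natCast,
      Real.sqrt_eq_rpow]
  have h2 : 1 ≤ √2 := Real.one_le_sqrt.2 one_le_two
  rw [hpow, div_le_div_iff₀ (by positivity) (by positivity)]
  field_simp
  nlinarith [Real.sq_sqrt hN.le, mul_le_mul_of_nonneg_left h2 (by positivity : 0 ≤ N * G)]

theorem stmt9_general (N : ℕ) (R lam T : ℝ) (hR : 0 < R) (hlam : 0 < lam)
    (g : EuclideanSpace ℝ (Fin 3)) (hg : ‖g‖ = 1)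
    (L : ℝ) (hL : L = (2 / 5) * R ^ 2)
    (U : Set (PosSp N)) (hU : IsOpen U)
    (𝓡 : PosSp N → (VSp N →L[ℝ] VSp N))
    (h𝓡C1 : ContDiffOn ℝ 1 𝓡 U)
    (h𝓡pos : ∀ Y ∈ U, ∀ v : VSp N, v ≠ 0 → 0 < ⟪v, 𝓡 Y v⟫)
    -- the trajectories `X, V, Ω` and Newton's equations
    (X V Ω V' Ω' : ℝ → PosSp N)
    (hXU : ∀ t ∈ Set.Icc (0 : ℝ) T, X t ∈ U)
    (hX : ∀ t ∈ Set.Icc (0 : ℝ) T, HasDerivWithinAt X (V t) (Set.Icc (0 : ℝ) T) t)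
    (hV : ∀ t ∈ Set.Icc (0 : ℝ) T, HasDerivWithinAt V (V' t) (Set.Icc (0 : ℝ) T) t)
    (hΩ : ∀ t ∈ Set.Icc (0 : ℝ) T, HasDerivWithinAt Ω (Ω' t) (Set.Icc (0 : ℝ) T) t)
    (hNewton : ∀ t ∈ Set.Icc (0 : ℝ) T,
      pairVec (V' t) (L • Ω' t) =
        lam • (gbar N g - (N : ℝ) • (𝓡 (X t) (pairVec (V t) (Ω t)))))
    -- the inertialess velocities `(Ṽ, Ω̃) = 𝓡(X)^{-1}(ḡ, 0)/N`
    (Vt Ωt : ℝ → PosSp N)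
    (hVt : ∀ t ∈ Set.Icc (0 : ℝ) T,
      𝓡 (X t) (pairVec (Vt t) (Ωt t)) = (N : ℝ)⁻¹ • gbar N g)
    -- the coercivity constant `c` of `𝓡̃` along the trajectory
    (c : ℝ)
    (hc_def : c = sInf {r : ℝ | ∃ t ∈ Set.Icc (0 : ℝ) T, ∃ A : VSp N,
      ‖A‖ = 1 ∧ r = ⟪A, Mvec L (𝓡 (X t) (Mvec L A))⟫})
    (hc_pos : 0 < c)
    -- `Φ(Y) = 𝓡̃(Y)^{-1} (ḡ, 0)` and the bound `G` on its derivative along the trajectory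
    (Φ : PosSp N → VSp N)
    (hΦ : ∀ Y ∈ U, Mvec L (𝓡 Y (Mvec L (Φ Y))) = gbar N g)
    (G : ℝ)
    (hG_def : G = sSup {r : ℝ | ∃ t ∈ Set.Icc (0 : ℝ) T, r = ‖fderiv ℝ Φ (X t)‖})
    -- the smallness assumption on the inertia
    (hlam_large : lam ≥ 2 * G / ((N : ℝ) ^ 2 * c)) :
    ∀ t ∈ Set.Icc (0 : ℝ) T,
      ‖pairVec (V t - Vt t) (Real.sqrt L • (Ω t - Ωt t))‖ ≤
        ‖pairVec (V 0 - Vt 0) (Real.sqrt L • (Ω 0 - Ωt 0))‖ *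
            Real.exp (-(lam * N * c * t) / 2) +
          (2 * Real.sqrt 2 * G / (lam * (N : ℝ) ^ ((5 : ℝ) / 2) * c ^ 2)) *
            (1 - Real.exp (-(lam * N * c * t) / 2)) := by
  intro t ht
  have h0 : (0 : ℝ) ∈ Icc (0 : ℝ) T := ⟨le_rfl, ht.1.trans ht.2⟩
  have hLpos : 0 < L := hL ▸ by positivity
  have : Nontrivial (VSp N) := nontrivial_of_sInf_pos (hc_def ▸ hc_pos)
  have hN : (0 : ℝ) < N := Nat.cast_pos.2 pos_of_nontrivial_VSp
  have h𝓡tpos : ∀ Y ∈ U, ∀ v, v ≠ 0 → 0 < ⟪v, conjM L (𝓡 Y) v⟫ :=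
    fun Y hY => inner_conjM_pos hLpos (h𝓡pos Y hY)
  have hcoer : ∀ s ∈ Icc (0 : ℝ) T, ∀ w, c * ‖w‖ ^ 2 ≤ ⟪w, conjM L (𝓡 (X s)) w⟫ :=
    fun s hs w => hc_def ▸ mul_norm_sq_le_inner_of_sInf (B := fun s => conjM L (𝓡 (X s)))
      (fun s hs => h𝓡tpos _ (hXU s hs)) hs w
  have hΦC1 : ContDiffOn ℝ 1 Φ U := contDiffOn_of_apply_eq hU
    (contDiffOn_const.clm_comp (h𝓡C1.clm_comp contDiffOn_const))
    (fun Y hY => injective_of_inner_map_self_pos (h𝓡tpos Y hY)) hΦ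
  have hG : ∀ s ∈ Icc (0 : ℝ) T, ‖fderiv ℝ Φ (X s)‖ ≤ G := fun s hs =>
    hG_def ▸ le_sSup_of_continuousOn isCompact_Icc ((hΦC1.continuousOn_fderiv_of_isOpen hU
      le_rfl).comp (fun τ hτ => (hX τ hτ).continuousWithinAt) hXU).norm hs
  have hG0 : 0 ≤ G := (norm_nonneg _).trans (hG 0 h0)
  have hΦX : ∀ s ∈ Icc (0 : ℝ) T, Φ (X s) = (N : ℝ) • pairVec (Vt s) (√L • Ωt s) :=
    fun s hs => eq_smul_pairVec_of_conjM_apply hLpos hN.ne'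
      (injective_of_inner_map_self_pos (h𝓡pos _ (hXU s hs))) (hΦ _ (hXU s hs)) (hVt s hs)
  have hΦ_le : ∀ s ∈ Icc (0 : ℝ) T, ‖Φ (X s)‖ ≤ √N / c := fun s hs => by
    simpa [norm_gbar, hg] using norm_le_div_of_mul_norm_sq_le_inner hc_pos
      ((hcoer s hs _).trans_eq (congrArg _ (hΦ _ (hXU s hs))))
  set y : ℝ → VSp N := fun s => pairVec (V s) (√L • Ω s) - (N : ℝ)⁻¹ • Φ (X s) with hy
  have hy_eq : ∀ s ∈ Icc (0 : ℝ) T, y s = pairVec (V s - Vt s) (√L • (Ω s - Ωt s)) := by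
    intro s hs
    simp only [hy]
    rw [hΦX s hs, inv_smul_smul₀ hN.ne', smul_sub, pairVec_sub]
  have hy_deriv : ∀ s ∈ Icc (0 : ℝ) T, HasDerivWithinAt y
      (-((lam * N) • conjM L (𝓡 (X s)) (y s)) - (N : ℝ)⁻¹ • fderiv ℝ Φ (X s) (V s))
      (Icc 0 T) s := fun s hs => by
    rw [hy_eq s hs, ← newton_modulated hLpos hN.ne' (hNewton s hs) (hVt s hs)]
    exact hasDerivWithinAt_pairVec_sub_smul_comp (hV s hs) ((hΩ s hs).const_smul √L) (hX s hs)
      ((hΦC1.differentiableOn one_ne_zero).differentiableAt (hU.mem_nhds (hXU s hs)))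
  have hV_le : ∀ s ∈ Icc (0 : ℝ) T, ‖V s‖ ≤ ‖y s‖ + (N : ℝ)⁻¹ * (√N / c) := fun s hs =>
    norm_le_norm_pairVec_sub_smul_add (by positivity) (hΦ_le s hs)
  have hK := half_le_sub_of_two_mul_div_le hN hc_pos hlam_large
  have hgron := norm_le_of_inner_deriv_le (K := lam * N * c / 2)
    (ε := (N : ℝ)⁻¹ * G * ((N : ℝ)⁻¹ * (√N / c))) (by positivity) (by positivity) hy_deriv
    (fun s hs => inner_neg_smul_sub_smul_le (by positivity) (by positivity) (hG s hs)
      (hcoer s hs (y s)) (hV_le s hs) hK) t ht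
  rw [← hy_eq t ht, ← hy_eq 0 h0,
    show -(lam * N * c * t) / 2 = -(lam * N * c / 2 * (t - 0)) by ring]
  refine hgron.trans (add_le_add le_rfl (mul_le_mul_of_nonneg_right
    (modulated_constant_le hN hlam hc_pos hG0) ?_))
  exact sub_nonneg.2 (Real.exp_le_one_iff.2
    (neg_nonpos.2 (mul_nonneg (by positivity) (sub_nonneg.2 ht.1))))

/-- Modulated-energy estimate for `N` inertial sedimenting spheres: with
`𝓡 : U → ℝ^{6N×6N}` a `C¹` symmetric positive definite resistance map,
`𝓡̃(Y) = M 𝓡(Y) M`, inertialess velocities `(Ṽ, Ω̃) = 𝓡(X)^{-1}(ḡ,0)/N`,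
`c = inf_{t ∈ [0,T]} min_{|A|₂ = 1} A ⬝ 𝓡̃(X(t)) A > 0` and
`G = sup_{t ∈ [0,T]} ‖D_Y (𝓡̃(Y)^{-1}(ḡ,0))|_{Y = X(t)}‖`, if `λ ≥ 2G/(N²c)` then for
all `t ∈ [0,T]`:
`|(V - Ṽ, L^{1/2}(Ω - Ω̃))(t)|₂ ≤ |(V - Ṽ, L^{1/2}(Ω - Ω̃))(0)|₂ e^{-λNct/2}
  + (2√2 G/(λ N^{5/2} c²)) (1 - e^{-λNct/2})`. -/
theorem stmt9 (N : ℕ) (R lam T : ℝ) (hR : 0 < R) (hlam : 0 < lam) (hT : 0 < T)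
    (g : EuclideanSpace ℝ (Fin 3)) (hg : ‖g‖ = 1)
    (L : ℝ) (hL : L = (2 / 5) * R ^ 2)
    (U : Set (PosSp N)) (hU : IsOpen U)
    (𝓡 : PosSp N → (VSp N →L[ℝ] VSp N))
    (h𝓡C1 : ContDiffOn ℝ 1 𝓡 U)
    (h𝓡sym : ∀ Y ∈ U, ∀ v w : VSp N, ⟪𝓡 Y v, w⟫ = ⟪v, 𝓡 Y w⟫)
    (h𝓡pos : ∀ Y ∈ U, ∀ v : VSp N, v ≠ 0 → 0 < ⟪v, 𝓡 Y v⟫)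
    -- the trajectories `X, V, Ω` and Newton's equations
    (X V Ω V' Ω' : ℝ → PosSp N)
    (hXU : ∀ t ∈ Set.Icc (0 : ℝ) T, X t ∈ U)
    (hX : ∀ t ∈ Set.Icc (0 : ℝ) T, HasDerivWithinAt X (V t) (Set.Icc (0 : ℝ) T) t)
    (hV : ∀ t ∈ Set.Icc (0 : ℝ) T, HasDerivWithinAt V (V' t) (Set.Icc (0 : ℝ) T) t)
    (hΩ : ∀ t ∈ Set.Icc (0 : ℝ) T, HasDerivWithinAt Ω (Ω' t) (Set.Icc (0 : ℝ) T) t)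
    (hNewton : ∀ t ∈ Set.Icc (0 : ℝ) T,
      pairVec (V' t) (L • Ω' t) =
        lam • (gbar N g - (N : ℝ) • (𝓡 (X t) (pairVec (V t) (Ω t)))))
    -- the inertialess velocities `(Ṽ, Ω̃) = 𝓡(X)^{-1}(ḡ, 0)/N`
    (Vt Ωt : ℝ → PosSp N)
    (hVt : ∀ t ∈ Set.Icc (0 : ℝ) T,
      𝓡 (X t) (pairVec (Vt t) (Ωt t)) = (N : ℝ)⁻¹ • gbar N g)
    -- the coercivity constant `c` of `𝓡̃` along the trajectory
    (c : ℝ)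
    (hc_def : c = sInf {r : ℝ | ∃ t ∈ Set.Icc (0 : ℝ) T, ∃ A : VSp N,
      ‖A‖ = 1 ∧ r = ⟪A, Mvec L (𝓡 (X t) (Mvec L A))⟫})
    (hc_pos : 0 < c)
    -- `Φ(Y) = 𝓡̃(Y)^{-1} (ḡ, 0)` and the bound `G` on its derivative along the trajectory
    (Φ : PosSp N → VSp N)
    (hΦ : ∀ Y ∈ U, Mvec L (𝓡 Y (Mvec L (Φ Y))) = gbar N g)
    (hΦdiff : ∀ t ∈ Set.Icc (0 : ℝ) T, DifferentiableAt ℝ Φ (X t))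
    (G : ℝ)
    (hG_def : G = sSup {r : ℝ | ∃ t ∈ Set.Icc (0 : ℝ) T, r = ‖fderiv ℝ Φ (X t)‖})
    -- the smallness assumption on the inertia
    (hlam_large : lam ≥ 2 * G / ((N : ℝ) ^ 2 * c)) :
    ∀ t ∈ Set.Icc (0 : ℝ) T,
      ‖pairVec (V t - Vt t) (Real.sqrt L • (Ω t - Ωt t))‖ ≤
        ‖pairVec (V 0 - Vt 0) (Real.sqrt L • (Ω 0 - Ωt 0))‖ *
            Real.exp (-(lam * N * c * t) / 2) +
          (2 * Real.sqrt 2 * G / (lam * (N : ℝ) ^ ((5 : ℝ) / 2) * c ^ 2)) *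
            (1 - Real.exp (-(lam * N * c * t) / 2)) :=
  stmt9_general N R lam T hR hlam g hg L hL U hU 𝓡 h𝓡C1 h𝓡pos X V Ω V' Ω' hXU hX hV hΩ hNewton Vt Ωt
    hVt c hc_def hc_pos Φ hΦ G hG_def hlam_large
end
end

section
/- Let λ > 0, T > 0, let X_i, X_j, V_i, V_j ∈ C¹([0,T]; ℝ³), and let Ṽ_i, Ṽ_j : [0,T] → ℝ³ be continuous, with Ẋ_k(t) = V_k(t) and V̇_k(t) = λ(−V_k(t) + Ṽ_k(t)) for k ∈ {i, j} and all t ∈ [0,T]. Assume there is C₁ > 0 such that |Ṽ_i(τ) − Ṽ_j(τ)| ≤ C₁ |X_i(τ) − X_j(τ)| for all τ ∈ [0,T], and that |V_i(0) − V_j(0)| ≤ (λ/2) |X_i(0) − X_j(0)|. Then for all t ∈ [0,T]: |X_i(t) − X_j(t)| ≥ (1/2) |X_i(0) − X_j(0)| − C₁ ∫₀ᵗ |X_i(τ) − X_j(τ)| dτ. -/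
open Set intervalIntegral MeasureTheory

/-- FTC-2 on a closed interval with one-sided derivatives. -/
lemma ftc_icc {E : Type*} [NormedAddCommGroup E] [NormedSpace ℝ E] [CompleteSpace E]
    {F F' : ℝ → E} {a b : ℝ} (hab : a ≤ b)
    (hd : ∀ s ∈ Set.Icc a b, HasDerivWithinAt F (F' s) (Set.Icc a b) s)
    (hc : ContinuousOn F' (Set.Icc a b)) :
    ∫ s in a..b, F' s = F b - F a := by
  apply intervalIntegral.integral_eq_sub_of_hasDeriv_right_of_le hab
  · exact fun s hs => (hd s hs).continuousWithinAt
  · intro s hs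
    exact (((hd s (Set.Ioo_subset_Icc_self hs)).hasDerivAt
      (Icc_mem_nhds hs.1 hs.2))).hasDerivWithinAt
  · exact hc.intervalIntegrable_of_Icc hab

/-- Separation estimate for a pair of inertial particles: if `Ẋ_k = V_k` and
`V̇_k = λ(-V_k + Ṽ_k)` for `k ∈ {i,j}` on `[0,T]`, with continuous drifts satisfying
`|Ṽ_i(τ) - Ṽ_j(τ)| ≤ C₁ |X_i(τ) - X_j(τ)|`, and if
`|V_i(0) - V_j(0)| ≤ (λ/2)|X_i(0) - X_j(0)|`, then for all `t ∈ [0,T]`: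
`|X_i(t) - X_j(t)| ≥ (1/2)|X_i(0) - X_j(0)| - C₁ ∫₀ᵗ |X_i(τ) - X_j(τ)| dτ`. -/
theorem stmt12 (lam T C₁ : ℝ) (hlam : 0 < lam) (hT : 0 < T) (hC₁ : 0 < C₁)
    (Xi Xj Vi Vj Vti Vtj : ℝ → EuclideanSpace ℝ (Fin 3))
    (hVti_cont : ContinuousOn Vti (Set.Icc (0 : ℝ) T))
    (hVtj_cont : ContinuousOn Vtj (Set.Icc (0 : ℝ) T))
    (hXi : ∀ t ∈ Set.Icc (0 : ℝ) T, HasDerivWithinAt Xi (Vi t) (Set.Icc (0 : ℝ) T) t)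
    (hXj : ∀ t ∈ Set.Icc (0 : ℝ) T, HasDerivWithinAt Xj (Vj t) (Set.Icc (0 : ℝ) T) t)
    (hVi : ∀ t ∈ Set.Icc (0 : ℝ) T,
      HasDerivWithinAt Vi (lam • (-(Vi t) + Vti t)) (Set.Icc (0 : ℝ) T) t)
    (hVj : ∀ t ∈ Set.Icc (0 : ℝ) T,
      HasDerivWithinAt Vj (lam • (-(Vj t) + Vtj t)) (Set.Icc (0 : ℝ) T) t)
    (hLip : ∀ τ ∈ Set.Icc (0 : ℝ) T, ‖Vti τ - Vtj τ‖ ≤ C₁ * ‖Xi τ - Xj τ‖)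
    (hV0 : ‖Vi 0 - Vj 0‖ ≤ (lam / 2) * ‖Xi 0 - Xj 0‖) :
    ∀ t ∈ Set.Icc (0 : ℝ) T,
      (1 / 2) * ‖Xi 0 - Xj 0‖ - C₁ * ∫ τ in (0 : ℝ)..t, ‖Xi τ - Xj τ‖ ≤
        ‖Xi t - Xj t‖ := by
  intro t ht
  obtain ⟨ht0, htT⟩ := ht
  -- abbreviations
  set Y : ℝ → EuclideanSpace ℝ (Fin 3) := fun s => Xi s - Xj s with hY
  set W : ℝ → EuclideanSpace ℝ (Fin 3) := fun s => Vi s - Vj s with hW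
  set Wt : ℝ → EuclideanSpace ℝ (Fin 3) := fun s => Vti s - Vtj s with hWt
  set f : ℝ → ℝ := fun τ => ‖Wt τ‖ with hf
  set q : ℝ → ℝ := fun τ => lam * Real.exp (lam * τ) * f τ with hq
  set g : ℝ → ℝ := fun s => ∫ τ in (0:ℝ)..s, q τ with hg
  have hWt_cont : ContinuousOn Wt (Set.Icc (0:ℝ) T) := hVti_cont.sub hVtj_cont
  have hf_cont : ContinuousOn f (Set.Icc (0:ℝ) T) := hWt_cont.norm
  have hq_cont : ContinuousOn q (Set.Icc (0:ℝ) T) := by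
    exact (continuousOn_const.mul (Real.continuous_exp.comp
      (continuous_const.mul continuous_id)).continuousOn).mul hf_cont
  have hW_cont : ContinuousOn W (Set.Icc (0:ℝ) T) :=
    fun s hs => ((hVi s hs).sub (hVj s hs)).continuousWithinAt
  have hY_cont : ContinuousOn Y (Set.Icc (0:ℝ) T) :=
    fun s hs => ((hXi s hs).sub (hXj s hs)).continuousWithinAt
  -- derivative of W
  have hW_deriv : ∀ s ∈ Set.Icc (0:ℝ) T,
      HasDerivWithinAt W (lam • (-(W s) + Wt s)) (Set.Icc (0:ℝ) T) s := by
    intro s hs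
    have := (hVi s hs).sub (hVj s hs)
    refine this.congr_deriv ?_
    simp only [hW, hWt]
    simp only [smul_add, smul_neg, smul_sub]
    abel
  -- derivative of ψ = exp(lam s) • W s
  have hexp_deriv : ∀ s : ℝ, HasDerivAt (fun u => Real.exp (lam * u))
      (lam * Real.exp (lam * s)) s := by
    intro s
    have h1 : HasDerivAt (fun u : ℝ => lam * u) lam s := by
      simpa using (hasDerivAt_id s).const_mul lam
    exact h1.exp.congr_deriv (by ring)
  have hpsi_deriv : ∀ s ∈ Set.Icc (0:ℝ) T,
      HasDerivWithinAt (fun u => Real.exp (lam * u) • W u)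
        ((lam * Real.exp (lam * s)) • Wt s) (Set.Icc (0:ℝ) T) s := by
    intro s hs
    have := ((hexp_deriv s).hasDerivWithinAt).smul (hW_deriv s hs)
    refine this.congr_deriv ?_
    simp only [smul_add, smul_smul, smul_neg, mul_comm (Real.exp (lam * s)) lam]
    abel
  -- Duhamel bound: ‖W s‖ ≤ exp(-lam s) * ‖W 0‖ + exp(-lam s) * g s
  have hWbound : ∀ s ∈ Set.Icc (0:ℝ) t,
      ‖W s‖ ≤ Real.exp (-(lam * s)) * ‖W 0‖ + Real.exp (-(lam * s)) * g s := by
    intro s hs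
    have hsub : Set.Icc (0:ℝ) s ⊆ Set.Icc (0:ℝ) T :=
      Set.Icc_subset_Icc le_rfl (hs.2.trans htT)
    have hftc : (∫ u in (0:ℝ)..s, (lam * Real.exp (lam * u)) • Wt u)
        = Real.exp (lam * s) • W s - Real.exp (lam * 0) • W 0 := by
      apply ftc_icc hs.1
      · exact fun u hu => (hpsi_deriv u (hsub hu)).mono hsub
      · exact (ContinuousOn.smul (continuousOn_const.mul (Real.continuous_exp.comp
          (continuous_const.mul continuous_id)).continuousOn) (hWt_cont.mono hsub))
    have hnorm : ‖∫ u in (0:ℝ)..s, (lam * Real.exp (lam * u)) • Wt u‖ ≤ g s := by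
      calc ‖∫ u in (0:ℝ)..s, (lam * Real.exp (lam * u)) • Wt u‖
          ≤ ∫ u in (0:ℝ)..s, ‖(lam * Real.exp (lam * u)) • Wt u‖ :=
            intervalIntegral.norm_integral_le_integral_norm hs.1
        _ = g s := by
            apply intervalIntegral.integral_congr
            intro u hu
            simp only [norm_smul, Real.norm_eq_abs, hq, hf]
            rw [abs_of_pos (by positivity)]
    have key : Real.exp (lam * s) • W s = Real.exp (lam * 0) • W 0
        + ∫ u in (0:ℝ)..s, (lam * Real.exp (lam * u)) • Wt u := by
      rw [hftc]; abel
    have h1 : Real.exp (lam * s) * ‖W s‖ ≤ ‖W 0‖ + g s := by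
      calc Real.exp (lam * s) * ‖W s‖ = ‖Real.exp (lam * s) • W s‖ := by
            rw [norm_smul, Real.norm_eq_abs, abs_of_pos (Real.exp_pos _)]
        _ ≤ ‖Real.exp (lam * 0) • W 0‖ + ‖∫ u in (0:ℝ)..s, (lam * Real.exp (lam * u)) • Wt u‖ := by
            rw [key]; exact norm_add_le _ _
        _ ≤ ‖W 0‖ + g s := by
            rw [mul_zero, Real.exp_zero, one_smul]
            exact add_le_add le_rfl hnorm
    have hepos := Real.exp_pos (lam * s)
    rw [Real.exp_neg, ← mul_add, inv_mul_eq_div, le_div_iff₀ hepos, mul_comm]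
    exact h1
  have hsub' : Set.Icc (0:ℝ) t ⊆ Set.Icc (0:ℝ) T := Set.Icc_subset_Icc le_rfl htT
  -- derivative of primitives of continuous functions at interior points
  have hprim_deriv : ∀ (p : ℝ → ℝ), ContinuousOn p (Set.Icc (0:ℝ) T) → ∀ s ∈ Set.Ioo (0:ℝ) t,
      HasDerivAt (fun u => ∫ τ in (0:ℝ)..u, p τ) (p s) s := by
    intro p hp s hs
    have hsT : s ∈ Set.Ioo (0:ℝ) T := ⟨hs.1, lt_of_lt_of_le hs.2 htT⟩
    refine intervalIntegral.integral_hasDerivAt_right ?_ ?_ ?_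
    · exact (hp.mono (Set.Icc_subset_Icc le_rfl hsT.2.le)).intervalIntegrable_of_Icc hs.1.le
    · exact ContinuousOn.stronglyMeasurableAtFilter isOpen_Ioo
        (hp.mono Set.Ioo_subset_Icc_self) s hsT
    · exact (hp s (Set.Ioo_subset_Icc_self hsT)).continuousAt (Icc_mem_nhds hsT.1 hsT.2)
  -- continuity of primitives on [0, t]
  have hprim_cont : ∀ (p : ℝ → ℝ), ContinuousOn p (Set.Icc (0:ℝ) T) →
      ContinuousOn (fun u => ∫ τ in (0:ℝ)..u, p τ) (Set.Icc (0:ℝ) t) := by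
    intro p hp
    have : ContinuousOn (fun u => ∫ τ in (0:ℝ)..u, p τ) (Set.uIcc (0:ℝ) t) := by
      apply intervalIntegral.continuousOn_primitive_interval
      rw [Set.uIcc_of_le ht0]
      exact (hp.mono hsub').integrableOn_Icc
    rwa [Set.uIcc_of_le ht0] at this
  have hg_cont : ContinuousOn g (Set.Icc (0:ℝ) t) := hprim_cont q hq_cont
  have hg_deriv : ∀ s ∈ Set.Ioo (0:ℝ) t, HasDerivAt g (q s) s := hprim_deriv q hq_cont
  have hexpneg : ∀ s : ℝ, HasDerivAt (fun u => Real.exp (-(lam * u)))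
      (-lam * Real.exp (-(lam * s))) s := by
    intro s
    have h1 : HasDerivAt (fun u : ℝ => -(lam * u)) (-lam) s := by
      exact ((hasDerivAt_id s).const_mul lam).neg.congr_deriv (by ring)
    exact h1.exp.congr_deriv (by ring)
  -- the integrated bound function and its antiderivative
  set D : ℝ → ℝ := fun s => Real.exp (-(lam * s)) * ‖W 0‖ + Real.exp (-(lam * s)) * g s with hD
  set Fa : ℝ → ℝ := fun u => -(1/lam) * (Real.exp (-(lam * u)) * (‖W 0‖ + g u))
      + ∫ τ in (0:ℝ)..u, f τ with hFa
  have hD_cont : ContinuousOn D (Set.Icc (0:ℝ) t) := by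
    have he : Continuous (fun u : ℝ => Real.exp (-(lam * u))) :=
      Real.continuous_exp.comp (continuous_const.mul continuous_id).neg
    exact (he.continuousOn.mul continuousOn_const).add (he.continuousOn.mul hg_cont)
  have hFa_cont : ContinuousOn Fa (Set.Icc (0:ℝ) t) := by
    have he : Continuous (fun u : ℝ => Real.exp (-(lam * u))) :=
      Real.continuous_exp.comp (continuous_const.mul continuous_id).neg
    exact (continuousOn_const.mul (he.continuousOn.mul
      (continuousOn_const.add hg_cont))).add (hprim_cont f hf_cont)
  have hFa_deriv : ∀ s ∈ Set.Ioo (0:ℝ) t, HasDerivAt Fa (D s) s := by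
    intro s hs
    have h2 : HasDerivAt (fun u => Real.exp (-(lam * u)) * (‖W 0‖ + g u))
        (-lam * Real.exp (-(lam * s)) * (‖W 0‖ + g s) + Real.exp (-(lam * s)) * q s) s := by
      have := (hexpneg s).mul ((hasDerivAt_const s ‖W 0‖).add (hg_deriv s hs))
      exact this.congr_deriv (by simp only [Pi.add_apply]; ring)
    have h3 := (h2.const_mul (-(1/lam))).add (hprim_deriv f hf_cont s hs)
    refine h3.congr_deriv (Eq.symm ?_)
    have hee : Real.exp (-(lam * s)) * (lam * Real.exp (lam * s) * f s) = lam * f s := by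
      rw [show Real.exp (-(lam*s)) * (lam * Real.exp (lam*s) * f s)
        = (Real.exp (-(lam*s)) * Real.exp (lam*s)) * (lam * f s) by ring,
        ← Real.exp_add]
      simp
    simp only [hD, hq]
    rw [show -(1/lam) * (-lam * Real.exp (-(lam*s)) * (‖W 0‖ + g s)
        + Real.exp (-(lam*s)) * (lam * Real.exp (lam*s) * f s))
      = -(1/lam) * (-lam * Real.exp (-(lam*s)) * (‖W 0‖ + g s))
        - (1/lam) * (Real.exp (-(lam*s)) * (lam * Real.exp (lam*s) * f s)) by ring, hee]
    field_simp
    ring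
  -- integral of D
  have hDint : ∫ s in (0:ℝ)..t, D s = Fa t - Fa 0 := by
    apply intervalIntegral.integral_eq_sub_of_hasDeriv_right_of_le ht0 hFa_cont
    · exact fun s hs => (hFa_deriv s hs).hasDerivWithinAt
    · exact hD_cont.intervalIntegrable_of_Icc ht0
  have hg0 : g 0 = 0 := by simp [hg]
  have hgt_nonneg : 0 ≤ g t := by
    apply intervalIntegral.integral_nonneg ht0
    intro u hu
    have : (0:ℝ) ≤ f u := norm_nonneg _
    simp only [hq]
    positivity
  have hDint_le : ∫ s in (0:ℝ)..t, D s ≤ (1/lam) * ‖W 0‖ + ∫ τ in (0:ℝ)..t, f τ := by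
    rw [hDint]
    simp only [hFa, hg0, mul_zero, neg_zero, Real.exp_zero, one_mul,
      intervalIntegral.integral_same, add_zero]
    have h1 : 0 ≤ Real.exp (-(lam * t)) * (‖W 0‖ + g t) :=
      mul_nonneg (Real.exp_pos _).le (by positivity)
    have h2 : 0 < (1:ℝ)/lam := by positivity
    nlinarith
  -- FTC for Y
  have hYftc : ∫ s in (0:ℝ)..t, W s = Y t - Y 0 := by
    apply ftc_icc ht0
    · intro s hs
      have := ((hXi s (hsub' hs)).sub (hXj s (hsub' hs))).mono hsub'
      exact this
    · exact hW_cont.mono hsub'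
  -- put the estimates together
  have hWint_le : ∫ s in (0:ℝ)..t, ‖W s‖ ≤ ∫ s in (0:ℝ)..t, D s := by
    apply intervalIntegral.integral_mono_on ht0
    · exact ((hW_cont.mono hsub').norm).intervalIntegrable_of_Icc ht0
    · exact hD_cont.intervalIntegrable_of_Icc ht0
    · exact hWbound
  have hYdiff : ‖Y t - Y 0‖ ≤ ∫ s in (0:ℝ)..t, ‖W s‖ := by
    rw [← hYftc]
    exact intervalIntegral.norm_integral_le_integral_norm ht0
  have hfint_le : ∫ τ in (0:ℝ)..t, f τ ≤ C₁ * ∫ τ in (0:ℝ)..t, ‖Y τ‖ := by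
    rw [← intervalIntegral.integral_const_mul]
    apply intervalIntegral.integral_mono_on ht0
    · exact ((hf_cont.mono hsub')).intervalIntegrable_of_Icc ht0
    · exact (continuousOn_const.mul ((hY_cont.mono hsub').norm)).intervalIntegrable_of_Icc ht0
    · exact fun u hu => hLip u (hsub' hu)
  have hW0 : (1/lam) * ‖W 0‖ ≤ (1/2) * ‖Y 0‖ := by
    have h : ‖W 0‖ ≤ lam / 2 * ‖Y 0‖ := hV0
    calc (1/lam) * ‖W 0‖ ≤ (1/lam) * (lam/2 * ‖Y 0‖) :=
          mul_le_mul_of_nonneg_left h (by positivity)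
      _ = 1/2 * ‖Y 0‖ := by field_simp
  have htri : ‖Y 0‖ - ‖Y t - Y 0‖ ≤ ‖Y t‖ := by
    have h := norm_sub_norm_le (Y 0) (Y t)
    have h2 : ‖Y 0 - Y t‖ = ‖Y t - Y 0‖ := norm_sub_rev _ _
    linarith
  linarith [hYdiff, hWint_le, hDint_le, hfint_le, hW0, htri]
end
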